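/- arXiv:2404.03774 — 8 statements merged into one kernel-verified Lean document; each statement's English description precedes it below -/
import Mathlib

section
/- Fix k ∈ ℕ and let B be the (2^k - 1) × (2^k - 1) real matrix whose rows and columns are indexed by the nonzero vectors of {0,1}^k, with B_{uv} = ⟨u, v⟩ mod 2. Then Bᵀ B = 2^{k-2}·𝟙𝟙ᵀ + 2^{k-2}·I, where 𝟙 is the all-ones vector and I is the identity matrix. Consequently the least singular value of B satisfies σ_min(B) ≥ 2^{(k-2)/2}. -/
lemma zmod2_cases (x : ZMod 2) : x = 0 ∨ x = 1 := by revert x; decide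

lemma chi_add (x y : ZMod 2) :
    ((-1:ℝ))^(x+y).val = (-1:ℝ)^x.val * (-1:ℝ)^y.val := by
  rcases zmod2_cases x with rfl | rfl <;> rcases zmod2_cases y with rfl | rfl <;>
    norm_num [show ZMod.val ((1:ZMod 2)+1) = 0 from rfl, show ZMod.val (2:ZMod 2) = 0 from rfl,
      show ZMod.val (1 : ZMod 2) = 1 from rfl,
      show ZMod.val (0 : ZMod 2) = 0 from rfl]

lemma val_real (x : ZMod 2) : (x.val : ℝ) = (1 - (-1:ℝ)^x.val)/2 := by
  rcases zmod2_cases x with rfl | rfl <;>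
    norm_num [show ZMod.val (1 : ZMod 2) = 1 from rfl,
      show ZMod.val (0 : ZMod 2) = 0 from rfl]

lemma ne_zero_eq_one {x : ZMod 2} (h : x ≠ 0) : x = 1 :=
  (zmod2_cases x).resolve_left h

lemma sum_chi {k : ℕ} (u : Fin k → ZMod 2) (hu : u ≠ 0) :
    ∑ w : Fin k → ZMod 2, (-1:ℝ)^(∑ i, u i * w i).val = 0 := by
  obtain ⟨i, hi⟩ : ∃ i, u i ≠ 0 := by
    by_contra h; push_neg at h; exact hu (funext fun i => h i)
  have hi1 : u i = 1 := ne_zero_eq_one hi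
  set e : Fin k → ZMod 2 := Pi.single i 1 with he
  have key : ∀ w : Fin k → ZMod 2,
      (∑ j, u j * (w + e) j) = (∑ j, u j * w j) + 1 := by
    intro w
    have h1 : ∑ j, u j * (w + e) j = ∑ j, (u j * w j + u j * e j) := by
      apply Finset.sum_congr rfl; intro j _; simp [mul_add]
    rw [h1, Finset.sum_add_distrib]
    congr 1
    rw [he, Finset.sum_eq_single i]
    · simp [hi1]
    · intro b _ hb; simp [Pi.single_apply, hb]
    · simp
  have reindex : ∑ w : Fin k → ZMod 2, (-1:ℝ)^(∑ i, u i * w i).val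
      = ∑ w : Fin k → ZMod 2, (-1:ℝ)^(∑ i, u i * (w + e) i).val :=
    (Fintype.sum_equiv (Equiv.addRight e) _ _ (fun w => rfl)).symm
  have flip : ∀ w : Fin k → ZMod 2, (-1:ℝ)^(∑ i, u i * (w + e) i).val
      = -((-1:ℝ)^(∑ i, u i * w i).val) := by
    intro w
    rw [key w, chi_add]
    norm_num [show ZMod.val (1 : ZMod 2) = 1 from rfl]
  rw [Finset.sum_congr rfl (fun w _ => flip w), Finset.sum_neg_distrib] at reindex
  linarith [reindex]

lemma lift_sum {k : ℕ} (u v : Fin k → ZMod 2) :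
    ∑ w : {w : Fin k → ZMod 2 // w ≠ 0},
      ((∑ i, w.1 i * u i).val : ℝ) * ((∑ i, w.1 i * v i).val : ℝ)
    = ∑ w : Fin k → ZMod 2,
      ((∑ i, w i * u i).val : ℝ) * ((∑ i, w i * v i).val : ℝ) := by
  rw [← Finset.sum_subtype (p := fun w => w ≠ (0 : Fin k → ZMod 2))
    (Finset.univ.filter (· ≠ 0)) (by simp)
    (fun w => ((∑ i, w i * u i).val : ℝ) * ((∑ i, w i * v i).val : ℝ))]
  rw [Finset.sum_filter]
  apply Finset.sum_congr rfl
  intro w _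
  by_cases hw : w = 0 <;> simp [hw]

lemma entry {k : ℕ} (u v : Fin k → ZMod 2) (hu : u ≠ 0) (hv : v ≠ 0) :
    ∑ w : {w : Fin k → ZMod 2 // w ≠ 0},
      ((∑ i, w.1 i * u i).val : ℝ) * ((∑ i, w.1 i * v i).val : ℝ)
    = ((2:ℝ)^k + (if u = v then (2:ℝ)^k else 0))/4 := by
  classical
  rw [lift_sum u v]
  have hterm : ∀ w : Fin k → ZMod 2,
      ((∑ i, w i * u i).val : ℝ) * ((∑ i, w i * v i).val : ℝ)
      = (1 - (-1:ℝ)^(∑ i, u i * w i).val - (-1:ℝ)^(∑ i, v i * w i).val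
          + (-1:ℝ)^(∑ i, (u + v) i * w i).val)/4 := by
    intro w
    have h1 : ∑ i, w i * u i = ∑ i, u i * w i := by
      apply Finset.sum_congr rfl; intros; ring
    have h2 : ∑ i, w i * v i = ∑ i, v i * w i := by
      apply Finset.sum_congr rfl; intros; ring
    have h3 : ∑ i, (u + v) i * w i = (∑ i, u i * w i) + (∑ i, v i * w i) := by
      rw [← Finset.sum_add_distrib]
      apply Finset.sum_congr rfl; intros; simp [add_mul]
    rw [h1, h2, h3, chi_add, val_real (∑ i, u i * w i), val_real (∑ i, v i * w i)]
    ring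
  rw [Finset.sum_congr rfl (fun w _ => hterm w)]
  have hcard : (Fintype.card (Fin k → ZMod 2) : ℝ) = 2^k := by
    simp [Fintype.card_fun]
  have hA := sum_chi u hu
  have hB := sum_chi v hv
  have hC : ∑ w : Fin k → ZMod 2, (-1:ℝ)^(∑ i, (u+v) i * w i).val
      = if u = v then (2:ℝ)^k else 0 := by
    by_cases huv : u = v
    · subst huv
      have h0 : u + u = 0 := by
        funext i
        have : ∀ x : ZMod 2, x + x = 0 := by decide
        exact this (u i)
      simp only [if_pos rfl, h0]
      simp [hcard]
    · have hne : u + v ≠ 0 := by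
        intro h
        apply huv
        funext i
        have := congrFun h i
        have h2 : ∀ x y : ZMod 2, x + y = 0 → x = y := by decide
        exact h2 _ _ this
      rw [if_neg huv]
      exact sum_chi (u + v) hne
  rw [← Finset.sum_div]
  rw [Finset.sum_add_distrib, Finset.sum_sub_distrib, Finset.sum_sub_distrib, hA, hB, hC,
    Finset.sum_const, Finset.card_univ, nsmul_eq_mul, mul_one, hcard]
  ring


/-- The least singular value of a square real matrix `A`:
`σ_min(A) = √(inf_{‖x‖₂ = 1} ‖A x‖₂²)`. -/
noncomputable def leastSingularValue {ι : Type*} [Fintype ι] (A : Matrix ι ι ℝ) : ℝ :=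
  Real.sqrt (⨅ x : {x : ι → ℝ // ∑ i, (x i) ^ 2 = 1}, ∑ i, (A.mulVec x.1 i) ^ 2)

/-- Fix `k ∈ ℕ` and let `B` be the `(2^k - 1) × (2^k - 1)` real matrix
indexed by the nonzero vectors of `{0,1}^k` with `B_{uv} = ⟨u, v⟩ mod 2`.
Then `Bᵀ B = 2^{k-2}·𝟙𝟙ᵀ + 2^{k-2}·I`, and consequently `σ_min(B) ≥ 2^{(k-2)/2}`. -/
theorem B_conditioning (k : ℕ) (hk : 1 ≤ k)
    (B : Matrix {w : Fin k → ZMod 2 // w ≠ 0} {w : Fin k → ZMod 2 // w ≠ 0} ℝ)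
    (hB : B = Matrix.of fun u v => (((∑ i, u.1 i * v.1 i : ZMod 2)).val : ℝ)) :
    B.transpose * B
        = ((2 : ℝ) ^ ((k : ℤ) - 2)) • (Matrix.of fun _ _ => (1 : ℝ))
          + ((2 : ℝ) ^ ((k : ℤ) - 2)) • (1 : Matrix _ _ ℝ)
      ∧ (2 : ℝ) ^ (((k : ℝ) - 2) / 2) ≤ leastSingularValue B := by
  have hpow : (2:ℝ) ^ ((k : ℤ) - 2) = 2^k / 4 := by
    rw [zpow_sub₀ (by norm_num : (2:ℝ) ≠ 0), zpow_natCast]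
    norm_num
  have part1 : B.transpose * B
      = ((2 : ℝ) ^ ((k : ℤ) - 2)) • (Matrix.of fun _ _ => (1 : ℝ))
        + ((2 : ℝ) ^ ((k : ℤ) - 2)) • (1 : Matrix _ _ ℝ) := by
    subst hB
    ext u v
    rw [Matrix.mul_apply]
    simp only [Matrix.transpose_apply, Matrix.of_apply, Matrix.add_apply, Matrix.smul_apply,
      Matrix.one_apply, smul_eq_mul]
    have := entry u.1 v.1 u.2 v.2
    rw [this, hpow]
    have hiff : (u = v) ↔ (u.1 = v.1) := Subtype.ext_iff
    by_cases huv : u = v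
    · rw [if_pos ((hiff).mp huv), if_pos huv]; ring
    · rw [if_neg (fun h => huv (hiff.mpr h)), if_neg huv]; ring
  refine ⟨part1, ?_⟩
  have hι : Nonempty {w : Fin k → ZMod 2 // w ≠ 0} := by
    refine ⟨⟨fun _ => 1, ?_⟩⟩
    intro h
    have := congrFun h ⟨0, hk⟩
    simp at this
  obtain ⟨i0⟩ := hι
  have hsphere : Nonempty {x : {w : Fin k → ZMod 2 // w ≠ 0} → ℝ // ∑ i, (x i) ^ 2 = 1} := by
    refine ⟨⟨fun i => if i = i0 then 1 else 0, ?_⟩⟩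
    rw [Finset.sum_congr rfl (fun i _ => by
      by_cases hi : i = i0 <;> simp [hi] :
      ∀ i ∈ Finset.univ, (if i = i0 then (1:ℝ) else 0)^2 = if i = i0 then 1 else 0)]
    simp
  have ha : (0:ℝ) < 2 ^ ((k : ℤ) - 2) := by positivity
  have key : ∀ x : {w : Fin k → ZMod 2 // w ≠ 0} → ℝ, ∑ i, (x i)^2 = 1 →
      (2:ℝ) ^ ((k : ℤ) - 2) ≤ ∑ i, (B.mulVec x i)^2 := by
    intro x hx
    have e1 : ∑ i, (B.mulVec x i)^2 = dotProduct (B.mulVec x) (B.mulVec x) := by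
      simp [dotProduct, pow_two]
    have e2 : dotProduct (B.mulVec x) (B.mulVec x)
        = dotProduct (((B.transpose * B)).mulVec x) x := by
      rw [Matrix.dotProduct_mulVec, ← Matrix.mulVec_transpose, Matrix.mulVec_mulVec]
    rw [e1, e2, part1, Matrix.add_mulVec, Matrix.smul_mulVec, Matrix.smul_mulVec,
      Matrix.one_mulVec, add_dotProduct, smul_dotProduct, smul_dotProduct]
    have hxx : dotProduct x x = 1 := by
      rw [← hx]; simp [dotProduct, pow_two]
    have hJ : dotProduct ((Matrix.of fun _ _ => (1:ℝ)).mulVec x) x = (∑ i, x i)^2 := by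
      simp only [Matrix.mulVec, dotProduct, Matrix.of_apply, one_mul]
      rw [← Finset.mul_sum, pow_two]
    rw [hxx, hJ, smul_eq_mul, smul_eq_mul, mul_one]
    nlinarith [sq_nonneg (∑ i, x i), ha]
  have hinf : (2:ℝ) ^ ((k : ℤ) - 2)
      ≤ ⨅ x : {x : {w : Fin k → ZMod 2 // w ≠ 0} → ℝ // ∑ i, (x i) ^ 2 = 1},
          ∑ i, (B.mulVec x.1 i) ^ 2 :=
    le_ciInf (fun x => key x.1 x.2)
  unfold leastSingularValue
  have hsqrt : (2:ℝ) ^ (((k : ℝ) - 2) / 2) = Real.sqrt ((2:ℝ) ^ ((k : ℤ) - 2)) := by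
    rw [show (2:ℝ) ^ ((k : ℤ) - 2) = (2:ℝ) ^ (((k:ℝ) - 2) : ℝ) by
      rw [← Real.rpow_intCast 2 ((k:ℤ) - 2)]; norm_num]
    rw [Real.sqrt_eq_rpow, ← Real.rpow_mul (by norm_num : (0:ℝ) ≤ 2)]
    congr 1
    ring
  rw [hsqrt]
  exact Real.sqrt_le_sqrt hinf
end

section
/- Let n ∈ ℕ and let A ∈ ℝ^{n×n} be an invertible matrix. Then σ_max(A)/σ_min(A) ≤ (2/|det(A)|) · (‖A‖_F/√n)^n, where σ_max and σ_min are the largest and smallest singular values of A and ‖A‖_F is the Frobenius norm. -/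
/-- The least singular value of a square real matrix:
`σ_min(A) = √(inf_{‖x‖₂ = 1} ‖A x‖₂²)`. -/
noncomputable def sMin (n : ℕ) (A : Matrix (Fin n) (Fin n) ℝ) : ℝ :=
  Real.sqrt (⨅ x : {x : Fin n → ℝ // ∑ i, (x i) ^ 2 = 1}, ∑ i, (A.mulVec x.1 i) ^ 2)

/-- The largest singular value of a square real matrix:
`σ_max(A) = √(sup_{‖x‖₂ = 1} ‖A x‖₂²)`. -/
noncomputable def sMax (n : ℕ) (A : Matrix (Fin n) (Fin n) ℝ) : ℝ :=
  Real.sqrt (⨆ x : {x : Fin n → ℝ // ∑ i, (x i) ^ 2 = 1}, ∑ i, (A.mulVec x.1 i) ^ 2)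

/-- The Frobenius norm `‖A‖_F = (Σ_{i,j} A_{ij}²)^{1/2}`. -/
noncomputable def frobNorm (n : ℕ) (A : Matrix (Fin n) (Fin n) ℝ) : ℝ :=
  Real.sqrt (∑ i, ∑ j, (A i j) ^ 2)

/-!
Let `μ` be the eigenvalues of `Aᵀ A`. Expanding in an orthonormal eigenbasis shows that
`σ_max²` and `σ_min²` are the largest and the smallest `μ i`, while `∏ μ i = det A ²` and
`∑ μ i = ‖A‖_F²`. AM-GM, applied to the `μ i` with both the largest and the smallest one replaced
by half the largest, gives `μ_max² ∏_{i ≠ max, min} μ i ≤ 4 (‖A‖_F² / n) ^ n`; multiplying by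
`μ_min` turns this into the square of the claim.
-/

open Matrix Finset

lemma Real.prod_le_mean_pow {ι : Type*} (s : Finset ι) {z : ι → ℝ} (hz : ∀ i ∈ s, 0 ≤ z i) :
    ∏ i ∈ s, z i ≤ ((∑ i ∈ s, z i) / #s) ^ #s := by
  rcases s.eq_empty_or_nonempty with rfl | hs
  · simp
  have hcard : (0 : ℝ) < #s := by exact_mod_cast hs.card_pos
  have h := Real.geom_mean_le_arith_mean s (fun _ => 1) z (fun _ _ => zero_le_one)
    (by simpa using hcard) hz
  simp only [Real.rpow_one, sum_const, nsmul_eq_mul, mul_one, one_mul] at h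
  rwa [Real.rpow_inv_le_iff_of_pos (prod_nonneg hz) (div_nonneg (sum_nonneg hz) hcard.le) hcard,
    Real.rpow_natCast] at h

lemma Real.sqrt_div_sqrt_le_of_mul_sq_le {M m d K : ℝ} (hm : 0 ≤ m) (hd : 0 < d) (hK : 0 ≤ K)
    (h : M * d ^ 2 ≤ 4 * K ^ 2 * m) : √M / √m ≤ 2 / d * K := by
  rcases hm.eq_or_lt with rfl | hm
  · simp only [Real.sqrt_zero, div_zero]; positivity
  rw [div_le_iff₀ (Real.sqrt_pos.2 hm), Real.sqrt_le_iff]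
  refine ⟨by positivity, ?_⟩
  calc M = M * d ^ 2 / d ^ 2 := by field_simp
    _ ≤ 4 * K ^ 2 * m / d ^ 2 := by gcongr
    _ = (2 / d * K * √m) ^ 2 := by rw [mul_pow, Real.sq_sqrt hm.le]; ring

section

variable {ι : Type*} [Fintype ι]

lemma Matrix.dotProduct_mulVec_mul_mul_transpose {R : Type*} [CommSemiring R]
    (U D : Matrix ι ι R) (x : ι → R) :
    x ⬝ᵥ (U * D * Uᵀ) *ᵥ x = (Uᵀ *ᵥ x) ⬝ᵥ D *ᵥ (Uᵀ *ᵥ x) := by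
  rw [← mulVec_mulVec, ← mulVec_mulVec, dotProduct_mulVec, ← mulVec_transpose]

lemma Matrix.sum_sq_mulVec_eq_dotProduct {m : Type*} [Fintype m] (A : Matrix m ι ℝ)
    (x : ι → ℝ) : ∑ i, (A *ᵥ x) i ^ 2 = x ⬝ᵥ (Aᴴ * A) *ᵥ x := by
  rw [← mulVec_mulVec, dotProduct_mulVec, conjTranspose_eq_transpose_of_trivial,
    vecMul_transpose]
  simp only [dotProduct, sq]

variable [DecidableEq ι]

lemma Matrix.sum_sq_star_mulVec_of_mem_unitaryGroup {U : Matrix ι ι ℝ}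
    (hU : U ∈ unitaryGroup ι ℝ) (x : ι → ℝ) :
    ∑ i, (star U *ᵥ x) i ^ 2 = ∑ i, x i ^ 2 := by
  have h := dotProduct_mulVec_mul_mul_transpose U 1 x
  rw [mul_one, ← conjTranspose_eq_transpose_of_trivial, ← star_eq_conjTranspose,
    mem_unitaryGroup_iff.mp hU, one_mulVec, one_mulVec] at h
  simpa only [dotProduct, sq] using h.symm

namespace Matrix.IsHermitian

variable {S : Matrix ι ι ℝ}

lemma dotProduct_mulVec_eq_sum_eigenvalues (hS : S.IsHermitian) (x : ι → ℝ) :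
    x ⬝ᵥ S *ᵥ x =
      ∑ i, hS.eigenvalues i * (star (hS.eigenvectorUnitary : Matrix ι ι ℝ) *ᵥ x) i ^ 2 := by
  conv_lhs => rw [hS.spectral_theorem, Unitary.conjStarAlgAut_apply]
  rw [star_eq_conjTranspose, conjTranspose_eq_transpose_of_trivial,
    dotProduct_mulVec_mul_mul_transpose, ← conjTranspose_eq_transpose_of_trivial,
    ← star_eq_conjTranspose]
  simp only [dotProduct, mulVec_diagonal, Function.comp_apply, RCLike.ofReal_real_eq_id, id]
  exact sum_congr rfl fun i _ => by ring

lemma exists_unit_dotProduct_mulVec_eq_eigenvalue (hS : S.IsHermitian) (j : ι) :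
    ∃ x : {x : ι → ℝ // ∑ i, x i ^ 2 = 1}, x.1 ⬝ᵥ S *ᵥ x.1 = hS.eigenvalues j := by
  have hv := hS.star_eigenvectorUnitary_mulVec j
  refine ⟨⟨hS.eigenvectorBasis j, ?_⟩, ?_⟩
  · rw [← sum_sq_star_mulVec_of_mem_unitaryGroup hS.eigenvectorUnitary.2, hv]
    simp [Pi.single_apply]
  · rw [dotProduct_mulVec_eq_sum_eigenvalues hS, hv]
    simp [Pi.single_apply]

lemma iSup_dotProduct_mulVec_eq_eigenvalue (hS : S.IsHermitian) {j : ι}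
    (hj : ∀ i, hS.eigenvalues i ≤ hS.eigenvalues j) :
    ⨆ x : {x : ι → ℝ // ∑ i, x i ^ 2 = 1}, x.1 ⬝ᵥ S *ᵥ x.1 = hS.eigenvalues j := by
  refine IsGreatest.csSup_eq ⟨?_, ?_⟩
  · obtain ⟨x, hx⟩ := hS.exists_unit_dotProduct_mulVec_eq_eigenvalue j
    exact ⟨x, hx⟩
  · rintro _ ⟨⟨x, hx⟩, rfl⟩
    calc x ⬝ᵥ S *ᵥ x = _ := hS.dotProduct_mulVec_eq_sum_eigenvalues x
      _ ≤ ∑ i, hS.eigenvalues j * (star (hS.eigenvectorUnitary : Matrix ι ι ℝ) *ᵥ x) i ^ 2 :=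
        sum_le_sum fun i _ => by gcongr; exact hj i
      _ = hS.eigenvalues j := by
        rw [← mul_sum, sum_sq_star_mulVec_of_mem_unitaryGroup hS.eigenvectorUnitary.2, hx,
          mul_one]

lemma iInf_dotProduct_mulVec_eq_eigenvalue (hS : S.IsHermitian) {k : ι}
    (hk : ∀ i, hS.eigenvalues k ≤ hS.eigenvalues i) :
    ⨅ x : {x : ι → ℝ // ∑ i, x i ^ 2 = 1}, x.1 ⬝ᵥ S *ᵥ x.1 = hS.eigenvalues k := by
  refine IsLeast.csInf_eq ⟨?_, ?_⟩
  · obtain ⟨x, hx⟩ := hS.exists_unit_dotProduct_mulVec_eq_eigenvalue k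
    exact ⟨x, hx⟩
  · rintro _ ⟨⟨x, hx⟩, rfl⟩
    calc hS.eigenvalues k
        = ∑ i, hS.eigenvalues k * (star (hS.eigenvectorUnitary : Matrix ι ι ℝ) *ᵥ x) i ^ 2 := by
          rw [← mul_sum, sum_sq_star_mulVec_of_mem_unitaryGroup hS.eigenvectorUnitary.2, hx,
            mul_one]
      _ ≤ ∑ i, hS.eigenvalues i * (star (hS.eigenvectorUnitary : Matrix ι ι ℝ) *ᵥ x) i ^ 2 :=
        sum_le_sum fun i _ => by gcongr; exact hk i
      _ = x ⬝ᵥ S *ᵥ x := (hS.dotProduct_mulVec_eq_sum_eigenvalues x).symm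

end Matrix.IsHermitian

lemma Matrix.prod_eigenvalues_conjTranspose_mul_self (A : Matrix ι ι ℝ) :
    ∏ i, (isHermitian_conjTranspose_mul_self A).eigenvalues i = A.det ^ 2 := by
  have h := (isHermitian_conjTranspose_mul_self A).det_eq_prod_eigenvalues
  simp only [det_mul, det_conjTranspose, star_trivial, RCLike.ofReal_real_eq_id, id] at h
  rw [← h, sq]

lemma Matrix.sum_eigenvalues_conjTranspose_mul_self (A : Matrix ι ι ℝ) :
    ∑ i, (isHermitian_conjTranspose_mul_self A).eigenvalues i = ∑ i, ∑ j, A i j ^ 2 := by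
  have h := (isHermitian_conjTranspose_mul_self A).trace_eq_sum_eigenvalues
  simp only [RCLike.ofReal_real_eq_id, id] at h
  rw [← h, sum_comm]
  simp [trace, mul_apply, sq]

lemma mul_prod_le_four_mul_mean_pow_mul {μ : ι → ℝ} (hμ : ∀ i, 0 ≤ μ i) (j k : ι) :
    μ j * ∏ i, μ i ≤ 4 * ((∑ i, μ i) / Fintype.card ι) ^ Fintype.card ι * μ k := by
  have hsum_nonneg : ∀ z : ι → ℝ, (∀ i, 0 ≤ z i) → 0 ≤ (∑ i, z i) / Fintype.card ι :=
    fun z hz => div_nonneg (sum_nonneg fun i _ => hz i) (Nat.cast_nonneg _)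
  rcases eq_or_ne j k with rfl | hjk
  · have hamgm := Real.prod_le_mean_pow univ fun i _ => hμ i
    rw [card_univ] at hamgm
    have := pow_nonneg (hsum_nonneg μ hμ) (Fintype.card ι)
    nlinarith [hμ j, prod_nonneg fun i (_ : i ∈ univ) => hμ i]
  set z : ι → ℝ := fun i => if i = j ∨ i = k then μ j / 2 else μ i
  have hz : ∀ i, 0 ≤ z i := fun i => by
    simp only [z]; split_ifs <;> linarith [hμ i, hμ j]
  have hrest : ∀ i ∈ univ \ {j, k}, z i = μ i := fun i hi => by simp_all [z]
  have hprod : ∀ f : ι → ℝ, ∏ i, f i = (∏ i ∈ univ \ {j, k}, f i) * (f j * f k) := fun f => by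
    rw [← prod_sdiff (subset_univ {j, k}), prod_pair hjk]
  have hsum : ∀ f : ι → ℝ, ∑ i, f i = (∑ i ∈ univ \ {j, k}, f i) + (f j + f k) := fun f => by
    rw [← sum_sdiff (subset_univ {j, k}), sum_pair hjk]
  have hzprod : 4 * ∏ i, z i = μ j ^ 2 * ∏ i ∈ univ \ {j, k}, μ i := by
    rw [hprod, prod_congr rfl hrest]; simp [z]; ring
  have hzsum : ∑ i, z i ≤ ∑ i, μ i := by
    rw [hsum, hsum, sum_congr rfl hrest]; simp [z]; linarith [hμ k]
  have hzamgm := Real.prod_le_mean_pow univ fun i _ => hz i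
  rw [card_univ] at hzamgm
  calc μ j * ∏ i, μ i = 4 * (∏ i, z i) * μ k := by rw [hzprod, hprod]; ring
    _ ≤ 4 * ((∑ i, z i) / Fintype.card ι) ^ Fintype.card ι * μ k := by gcongr; exact hμ k
    _ ≤ 4 * ((∑ i, μ i) / Fintype.card ι) ^ Fintype.card ι * μ k := by
        have := hsum_nonneg z hz
        gcongr
        exact hμ k

end

lemma sMax_eq_sqrt_eigenvalue {n : ℕ} (A : Matrix (Fin n) (Fin n) ℝ) {j : Fin n}
    (hj : ∀ i, (isHermitian_conjTranspose_mul_self A).eigenvalues i ≤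
      (isHermitian_conjTranspose_mul_self A).eigenvalues j) :
    sMax n A = √((isHermitian_conjTranspose_mul_self A).eigenvalues j) := by
  simp only [sMax, sum_sq_mulVec_eq_dotProduct]
  rw [(isHermitian_conjTranspose_mul_self A).iSup_dotProduct_mulVec_eq_eigenvalue hj]

lemma sMin_eq_sqrt_eigenvalue {n : ℕ} (A : Matrix (Fin n) (Fin n) ℝ) {k : Fin n}
    (hk : ∀ i, (isHermitian_conjTranspose_mul_self A).eigenvalues k ≤
      (isHermitian_conjTranspose_mul_self A).eigenvalues i) :
    sMin n A = √((isHermitian_conjTranspose_mul_self A).eigenvalues k) := by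
  simp only [sMin, sum_sq_mulVec_eq_dotProduct]
  rw [(isHermitian_conjTranspose_mul_self A).iInf_dotProduct_mulVec_eq_eigenvalue hk]

lemma sMin_zero (A : Matrix (Fin 0) (Fin 0) ℝ) : sMin 0 A = 0 := by
  have : IsEmpty {x : Fin 0 → ℝ // ∑ i, x i ^ 2 = 1} := ⟨fun x => by simpa using x.2⟩
  simp [sMin]

/-- Let `A ∈ ℝ^{n×n}` be invertible. Then
`σ_max(A)/σ_min(A) ≤ (2/|det A|) · (‖A‖_F/√n)^n`. -/
theorem guggenheimer_bound (n : ℕ) (A : Matrix (Fin n) (Fin n) ℝ) (hA : IsUnit A.det) :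
    sMax n A / sMin n A ≤ 2 / |A.det| * (frobNorm n A / Real.sqrt n) ^ n := by
  rcases Nat.eq_zero_or_pos n with rfl | hn
  · rw [sMin_zero, div_zero]; positivity
  have : Nonempty (Fin n) := Fin.pos_iff_nonempty.1 hn
  set μ := (isHermitian_conjTranspose_mul_self A).eigenvalues
  have hμ : ∀ i, 0 ≤ μ i := (posSemidef_conjTranspose_mul_self A).eigenvalues_nonneg
  obtain ⟨j, hj⟩ := Finite.exists_max μ
  obtain ⟨k, hk⟩ := Finite.exists_min μ
  rw [sMax_eq_sqrt_eigenvalue A hj, sMin_eq_sqrt_eigenvalue A hk, frobNorm,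
    ← sum_eigenvalues_conjTranspose_mul_self]
  refine Real.sqrt_div_sqrt_le_of_mul_sq_le (hμ k) (abs_pos.2 hA.ne_zero) (by positivity) ?_
  calc μ j * |A.det| ^ 2 = μ j * ∏ i, μ i := by
        rw [sq_abs, prod_eigenvalues_conjTranspose_mul_self]
    _ ≤ 4 * ((∑ i, μ i) / n) ^ n * μ k := by
        simpa using mul_prod_le_four_mul_mean_pow_mul hμ j k
    _ = 4 * ((√(∑ i, μ i) / √n) ^ n) ^ 2 * μ k := by
        have hmean : 0 ≤ (∑ i, μ i) / n := div_nonneg (sum_nonneg fun i _ => hμ i) n.cast_nonneg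
        rw [← pow_mul, mul_comm n, pow_mul, ← Real.sqrt_div' _ n.cast_nonneg, Real.sq_sqrt hmean]
end

section
/- Let h ∈ ℕ and let V ∈ ℝ^{h×h} be the Vandermonde matrix with entries V_{ij} = (i-1)^{j-1} for i, j ∈ [h] (nodes 0, 1, ..., h-1). Then the least singular value of V satisfies σ_min(V) ≥ 1/(2 h^{h²}). -/
lemma one_le_prod_real {ι : Type*} {s : Finset ι} {f : ι → ℝ} (hf : ∀ i ∈ s, 1 ≤ f i) :
    1 ≤ ∏ i ∈ s, f i :=
  calc (1:ℝ) = ∏ _i ∈ s, 1 := by simp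
    _ ≤ ∏ i ∈ s, f i := Finset.prod_le_prod (fun i _ => zero_le_one) hf

lemma fact_le_pow_pred : ∀ n : ℕ, n.factorial ≤ n ^ (n - 1)
  | 0 => le_refl _
  | 1 => le_refl _
  | (n + 2) => by
    have ih := fact_le_pow_pred (n + 1)
    calc (n + 2).factorial = (n + 2) * (n + 1).factorial := rfl
      _ ≤ (n + 2) * (n + 1) ^ n := Nat.mul_le_mul_left _ (by simpa using ih)
      _ ≤ (n + 2) * (n + 2) ^ n := Nat.mul_le_mul_left _ (Nat.pow_le_pow_left (by omega) n)
      _ = (n + 2) ^ (n + 1) := (pow_succ' _ _).symm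

/-- Let `h ∈ ℕ` and let `V ∈ ℝ^{h×h}` be the Vandermonde matrix with
nodes `0, 1, ..., h-1`, i.e. `V_{ij} = i^j` (0-indexed). Then the least singular
value of `V` satisfies `σ_min(V) ≥ 1/(2 h^{h²})`. -/
theorem vandermonde_least_singular_value (h : ℕ) (hh : 0 < h) :
    1 / (2 * (h : ℝ) ^ (h ^ 2)) ≤ sMin h (Matrix.vandermonde (fun i : Fin h => (i : ℝ))) := by
  set V : Matrix (Fin h) (Fin h) ℝ := Matrix.vandermonde (fun i : Fin h => (i : ℝ)) with hV
  have h1R : (1 : ℝ) ≤ (h : ℝ) := by exact_mod_cast hh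
  -- determinant is at least 1
  have hdet1 : (1 : ℝ) ≤ V.det := by
    rw [hV, Matrix.det_vandermonde]
    apply one_le_prod_real
    intro i _
    apply one_le_prod_real
    intro j hj
    have hij : (i : ℕ) < (j : ℕ) := Fin.lt_iff_val_lt_val.mp (Finset.mem_Ioi.mp hj)
    have : ((i : ℕ) : ℝ) + 1 ≤ ((j : ℕ) : ℝ) := by exact_mod_cast hij
    linarith
  have hdet0 : V.det ≠ 0 := by linarith
  set W : Matrix (Fin h) (Fin h) ℝ := V⁻¹ with hW
  -- entry bound on V
  have hVent : ∀ a b : Fin h, |V a b| ≤ (h : ℝ) ^ (h - 1) := by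
    intro a b
    have h1 : V a b = ((a : ℕ) : ℝ) ^ (b : ℕ) := rfl
    rw [h1, abs_of_nonneg (by positivity)]
    calc ((a : ℕ) : ℝ) ^ (b : ℕ) ≤ (h : ℝ) ^ (b : ℕ) := by
          apply pow_le_pow_left₀ (by positivity)
          exact_mod_cast (a.isLt.le)
      _ ≤ (h : ℝ) ^ (h - 1) := pow_le_pow_right₀ h1R (by omega)
  -- entry bound on W = V⁻¹
  have hWent : ∀ i j : Fin h, |W i j| ≤ (h : ℝ) ^ (h - 1) * (h : ℝ) ^ ((h - 1) * h) := by
    intro i j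
    have hadj : |(V.adjugate) i j| ≤ (h : ℝ) ^ (h - 1) * (h : ℝ) ^ ((h - 1) * h) := by
      rw [Matrix.adjugate_apply]
      have hent : ∀ a b : Fin h, |(V.updateRow j (Pi.single i 1)) a b| ≤ (h : ℝ) ^ (h - 1) := by
        intro a b
        rcases eq_or_ne a j with rfl | hne
        · rw [Matrix.updateRow_self]
          have hle : |(Pi.single i 1 : Fin h → ℝ) b| ≤ 1 := by
            rw [Pi.single_apply]
            split <;> simp
          exact hle.trans (one_le_pow₀ h1R)
        · rw [Matrix.updateRow_ne hne]
          exact hVent a b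
      have := Matrix.det_le (abv := (AbsoluteValue.abs : AbsoluteValue ℝ ℝ)) hent
      simp only [Fintype.card_fin, nsmul_eq_mul] at this
      calc |(V.updateRow j (Pi.single i 1)).det|
          ≤ (h.factorial : ℝ) * ((h : ℝ) ^ (h - 1)) ^ h := this
        _ ≤ (h : ℝ) ^ (h - 1) * (h : ℝ) ^ ((h - 1) * h) := by
            rw [← pow_mul]
            apply mul_le_mul_of_nonneg_right _ (by positivity)
            exact_mod_cast fact_le_pow_pred h
    have hWij : W i j = (V.det)⁻¹ * V.adjugate i j := by
      rw [hW, Matrix.inv_def, Ring.inverse_eq_inv', Matrix.smul_apply, smul_eq_mul]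
    rw [hWij, abs_mul]
    have h1 : |(V.det)⁻¹| ≤ 1 := by
      rw [abs_of_nonneg (by positivity)]
      exact inv_le_one_of_one_le₀ hdet1
    calc |(V.det)⁻¹| * |V.adjugate i j| ≤ 1 * |V.adjugate i j| := by
          apply mul_le_mul_of_nonneg_right h1 (abs_nonneg _)
      _ = |V.adjugate i j| := one_mul _
      _ ≤ _ := hadj
  -- Frobenius norm bound for W
  have hB : (0:ℝ) < (2 * (h : ℝ) ^ (h ^ 2)) ^ 2 := by positivity
  have hF : (∑ i : Fin h, ∑ j : Fin h, W i j ^ 2) ≤ (2 * (h : ℝ) ^ (h ^ 2)) ^ 2 := by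
    have hexp : 2 + ((h - 1) * 2 + (h - 1) * h * 2) = 2 * h ^ 2 := by
      obtain ⟨k, rfl⟩ : ∃ k, h = k + 1 := ⟨h - 1, by omega⟩
      simp only [Nat.add_sub_cancel]
      ring
    calc ∑ i : Fin h, ∑ j : Fin h, W i j ^ 2
        ≤ ∑ _i : Fin h, ∑ _j : Fin h, ((h : ℝ) ^ (h - 1) * (h : ℝ) ^ ((h - 1) * h)) ^ 2 := by
          apply Finset.sum_le_sum; intro i _; apply Finset.sum_le_sum; intro j _
          calc W i j ^ 2 = |W i j| ^ 2 := (sq_abs _).symm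
            _ ≤ _ := pow_le_pow_left₀ (abs_nonneg _) (hWent i j) 2
      _ = (h:ℝ) ^ 2 * ((h : ℝ) ^ (h - 1) * (h : ℝ) ^ ((h - 1) * h)) ^ 2 := by
          simp [Finset.sum_const]; ring
      _ = (h:ℝ) ^ (2 + ((h - 1) * 2 + (h - 1) * h * 2)) := by
          rw [mul_pow, ← pow_mul, ← pow_mul, ← pow_add, ← pow_add]
      _ = (h:ℝ) ^ (2 * h ^ 2) := by rw [hexp]
      _ = ((h:ℝ) ^ (h ^ 2)) ^ 2 := by rw [← pow_mul, Nat.mul_comm]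
      _ ≤ (2 * (h : ℝ) ^ (h ^ 2)) ^ 2 := by nlinarith [pow_nonneg (le_trans zero_le_one h1R) (h^2)]
  -- the key pointwise bound
  have key : ∀ x : {x : Fin h → ℝ // ∑ i, (x i) ^ 2 = 1},
      (1 / (2 * (h : ℝ) ^ (h ^ 2))) ^ 2 ≤ ∑ i, (V.mulVec x.1 i) ^ 2 := by
    rintro ⟨x, hx⟩
    set y : Fin h → ℝ := V.mulVec x with hy
    have hSnn : (0:ℝ) ≤ ∑ j, y j ^ 2 := Finset.sum_nonneg fun j _ => sq_nonneg _
    have hrec : W.mulVec y = x := by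
      rw [hy, Matrix.mulVec_mulVec, Matrix.nonsing_inv_mul V (isUnit_iff_ne_zero.mpr hdet0), Matrix.one_mulVec]
    have hCS : (1:ℝ) ≤ (∑ i : Fin h, ∑ j : Fin h, W i j ^ 2) * ∑ j, y j ^ 2 := by
      calc (1:ℝ) = ∑ i, (W.mulVec y i) ^ 2 := by rw [hrec]; exact hx.symm
        _ ≤ ∑ i : Fin h, ((∑ j, W i j ^ 2) * ∑ j, y j ^ 2) := by
            apply Finset.sum_le_sum; intro i _
            have hmv : W.mulVec y i = ∑ j, W i j * y j := rfl
            rw [hmv]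
            exact Finset.sum_mul_sq_le_sq_mul_sq Finset.univ _ _
        _ = (∑ i : Fin h, ∑ j : Fin h, W i j ^ 2) * ∑ j, y j ^ 2 := by
            rw [Finset.sum_mul]
    have h1 : (1:ℝ) ≤ (2 * (h : ℝ) ^ (h ^ 2)) ^ 2 * ∑ j, y j ^ 2 :=
      hCS.trans (mul_le_mul_of_nonneg_right hF hSnn)
    rw [div_pow, one_pow, div_le_iff₀ hB]
    linarith
  -- conclude
  have hne : Nonempty {x : Fin h → ℝ // ∑ i, (x i) ^ 2 = 1} := by
    refine ⟨⟨(Pi.single ⟨0, hh⟩ 1 : Fin h → ℝ), ?_⟩⟩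
    have hterm : ∀ i : Fin h, ((Pi.single ⟨0, hh⟩ 1 : Fin h → ℝ) i) ^ 2
        = if i = ⟨0, hh⟩ then (1:ℝ) else 0 := by
      intro i; rw [Pi.single_apply]; split <;> norm_num
    rw [Finset.sum_congr rfl fun i _ => hterm i, Finset.sum_ite_eq' Finset.univ]
    simp
  have hinf : (1 / (2 * (h : ℝ) ^ (h ^ 2))) ^ 2
      ≤ ⨅ x : {x : Fin h → ℝ // ∑ i, (x i) ^ 2 = 1}, ∑ i, (V.mulVec x.1 i) ^ 2 :=
    le_ciInf key
  have hinf0 : (0:ℝ) ≤ ⨅ x : {x : Fin h → ℝ // ∑ i, (x i) ^ 2 = 1},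
      ∑ i, (V.mulVec x.1 i) ^ 2 :=
    le_trans (by positivity) hinf
  rw [sMin, Real.le_sqrt (by positivity) hinf0]
  exact hinf
end

section
/- Fix α, β > 0 and n ∈ ℕ. Let A ∈ ℝ^{n×n} be a lower-triangular matrix with |A_{ii}| ≥ α for all i and |A_{ij}| ≤ β for all i, j. Then the least singular value of A satisfies σ_min(A) ≥ (α/2) · (α/(β√n))^n. -/
open Finset Matrix

theorem le_sMin {n : ℕ} (hn : 0 < n) {A : Matrix (Fin n) (Fin n) ℝ} {c : ℝ} (hc : 0 ≤ c)
    (h : ∀ x : Fin n → ℝ, ∑ i, x i ^ 2 = 1 → c ≤ √(∑ i, (A *ᵥ x) i ^ 2)) : c ≤ sMin n A := by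
  have : Nonempty {x : Fin n → ℝ // ∑ i, x i ^ 2 = 1} :=
    ⟨⟨Pi.single ⟨0, hn⟩ 1, by simp [Pi.single_apply]⟩⟩
  refine (Real.le_sqrt hc (le_ciInf fun x => sum_nonneg fun i _ => sq_nonneg _)).2 ?_
  exact le_ciInf fun x => (Real.le_sqrt hc (sum_nonneg fun i _ => sq_nonneg _)).1 (h x.1 x.2)

theorem one_le_sum_abs_of_sum_sq_eq_one {ι : Type*} {s : Finset ι} {x : ι → ℝ}
    (hx : ∑ i ∈ s, x i ^ 2 = 1) : 1 ≤ ∑ i ∈ s, |x i| := by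
  refine (one_le_sq_iff₀ (sum_nonneg fun i _ => abs_nonneg _)).1 ?_
  calc 1 = ∑ i ∈ s, |x i| ^ 2 := by simp_rw [sq_abs, hx]
    _ ≤ _ := sum_sq_le_sq_sum_of_nonneg fun i _ => abs_nonneg _

theorem add_sum_le_mul_one_add_pow_of_le_mul_add_sum_Iio {n : ℕ} {a : Fin n → ℝ} {M r : ℝ}
    (hr : 0 ≤ r) (h : ∀ i, a i ≤ r * (M + ∑ j ∈ Iio i, a j)) :
    M + ∑ i, a i ≤ M * (1 + r) ^ n := by
  induction n with
  | zero => simp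
  | succ n ih =>
    have hinit := ih (a := fun i => a i.castSucc) fun i => by
      simpa [← Fin.map_castSuccEmb_Iio] using h i.castSucc
    have hlast : a (Fin.last n) ≤ r * (M + ∑ i : Fin n, a i.castSucc) := by
      simpa [Fin.Iio_last_eq_map] using h (Fin.last n)
    calc M + ∑ i, a i = (M + ∑ i : Fin n, a i.castSucc) + a (Fin.last n) := by
          rw [Fin.sum_univ_castSucc, add_assoc]
      _ ≤ (1 + r) * (M + ∑ i : Fin n, a i.castSucc) := by linarith
      _ ≤ (1 + r) * (M * (1 + r) ^ n) := by gcongr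
      _ = M * (1 + r) ^ (n + 1) := by ring

namespace Matrix.IsLowerTriangular

variable {ι : Type*} [Fintype ι] [LinearOrder ι] [LocallyFiniteOrderBot ι]

theorem mulVec_apply {R : Type*} [NonUnitalNonAssocSemiring R] {M : Matrix ι ι R}
    (hM : M.IsLowerTriangular) (x : ι → R) (i : ι) :
    (M *ᵥ x) i = M i i * x i + ∑ j ∈ Iio i, M i j * x j := by
  rw [mulVec, dotProduct, ← sum_subset (subset_univ (Iic i)), Iic_eq_cons_Iio, sum_cons]
  intro j _ hj
  rw [hM (OrderDual.toDual_lt_toDual.2 (not_le.1 (by simpa using hj))), zero_mul]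

theorem mul_abs_le_abs_mulVec_apply_add {M : Matrix ι ι ℝ} (hM : M.IsLowerTriangular)
    {α β : ℝ} {i : ι} (hdiag : α ≤ |M i i|) (hrow : ∀ j, |M i j| ≤ β) (x : ι → ℝ) :
    α * |x i| ≤ |(M *ᵥ x) i| + β * ∑ j ∈ Iio i, |x j| := by
  calc α * |x i| ≤ |M i i * x i| := by rw [abs_mul]; gcongr
    _ = |(M *ᵥ x) i - ∑ j ∈ Iio i, M i j * x j| := by rw [hM.mulVec_apply, add_sub_cancel_right]
    _ ≤ |(M *ᵥ x) i| + ∑ j ∈ Iio i, |M i j| * |x j| := by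
      refine (abs_sub _ _).trans ?_
      gcongr
      simpa only [abs_mul] using abs_sum_le_sum_abs (fun j => M i j * x j) (Iio i)
    _ ≤ |(M *ᵥ x) i| + β * ∑ j ∈ Iio i, |x j| := by
      rw [mul_sum]; gcongr with j; exact hrow j

theorem add_mul_sum_abs_le {n : ℕ} {A : Matrix (Fin n) (Fin n) ℝ}
    (hA : A.IsLowerTriangular) {α β M : ℝ} (hα : 0 < α) (hβ : 0 ≤ β)
    (hdiag : ∀ i, α ≤ |A i i|) (hbound : ∀ i j, |A i j| ≤ β) (x : Fin n → ℝ)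
    (hM : ∀ i, |(A *ᵥ x) i| ≤ M) :
    M + β * ∑ i, |x i| ≤ M * (1 + β / α) ^ n := by
  rw [mul_sum]
  refine add_sum_le_mul_one_add_pow_of_le_mul_add_sum_Iio (div_nonneg hβ hα.le) fun i => ?_
  calc β * |x i| = β / α * (α * |x i|) := by field_simp
    _ ≤ β / α * (M + ∑ j ∈ Iio i, β * |x j|) := by
      rw [← mul_sum]
      gcongr
      exact (hA.mul_abs_le_abs_mulVec_apply_add (hdiag i) (hbound i) x).trans
        (by gcongr; exact hM i)

end Matrix.IsLowerTriangular

theorem four_pow_le_four_mul_pow_self {n : ℕ} (hn : 0 < n) : 4 ^ n ≤ 4 * n ^ n := by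
  rcases le_or_gt 4 n with h | h
  · exact (Nat.pow_le_pow_left h n).trans (Nat.le_mul_of_pos_left _ (by norm_num))
  · interval_cases n <;> norm_num

theorem two_pow_le_two_mul_sqrt_pow {n : ℕ} (hn : 0 < n) : (2 : ℝ) ^ n ≤ 2 * √n ^ n := by
  refine (pow_le_pow_iff_left₀ (by positivity) (by positivity) two_ne_zero).1 ?_
  have hsq : (√n ^ n) ^ 2 = (n : ℝ) ^ n := by
    rw [← pow_mul, mul_comm, pow_mul, Real.sq_sqrt n.cast_nonneg]
  rw [mul_pow, hsq, ← pow_mul, mul_comm, pow_mul]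
  exact_mod_cast four_pow_le_four_mul_pow_self hn

theorem half_mul_div_pow_mul_le {α β : ℝ} {n : ℕ} (hα : 0 < α) (hαβ : α ≤ β) (hn : 0 < n) :
    α / 2 * (α / (β * √n)) ^ n * (2 * β / α) ^ n ≤ β := by
  have hβ : 0 < β := hα.trans_le hαβ
  have hsn : 0 < √(n : ℝ) := Real.sqrt_pos.2 (by exact_mod_cast hn)
  have hratio : α / (β * √n) * (2 * β / α) = 2 / √n := by field_simp
  calc α / 2 * (α / (β * √n)) ^ n * (2 * β / α) ^ n = α * (2 ^ n / (2 * √n ^ n)) := by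
        rw [mul_assoc, ← mul_pow, hratio, div_pow]; ring
    _ ≤ α * 1 := by
      gcongr
      exact (div_le_one (by positivity)).2 (two_pow_le_two_mul_sqrt_pow hn)
    _ ≤ β := by rwa [mul_one]

theorem lowerTriangular_least_singular_value_general (α β : ℝ) (hα : 0 < α)
    (n : ℕ) (hn : 0 < n) (A : Matrix (Fin n) (Fin n) ℝ)
    (htri : ∀ i j : Fin n, i < j → A i j = 0)
    (hdiag : ∀ i : Fin n, α ≤ |A i i|)
    (hbound : ∀ i j : Fin n, |A i j| ≤ β) :
    α / 2 * (α / (β * Real.sqrt n)) ^ n ≤ sMin n A := by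
  have hαβ : α ≤ β := (hdiag ⟨0, hn⟩).trans (hbound _ _)
  have hβ : 0 < β := hα.trans_le hαβ
  have hA : A.IsLowerTriangular := fun i j hij => htri i j hij
  refine le_sMin hn (by positivity) fun x hx => ?_
  set M := √(∑ i, (A *ᵥ x) i ^ 2)
  have hM0 : 0 ≤ M := Real.sqrt_nonneg _
  have hM : ∀ i, |(A *ᵥ x) i| ≤ M := fun i =>
    Real.abs_le_sqrt (single_le_sum (f := fun i => (A *ᵥ x) i ^ 2)
      (fun _ _ => sq_nonneg _) (mem_univ i))
  have hgrowth : 0 < (2 * β / α) ^ n := by positivity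
  refine le_of_mul_le_mul_right ?_ hgrowth
  calc α / 2 * (α / (β * √n)) ^ n * (2 * β / α) ^ n ≤ β := half_mul_div_pow_mul_le hα hαβ hn
    _ ≤ β * ∑ i, |x i| := le_mul_of_one_le_right hβ.le (one_le_sum_abs_of_sum_sq_eq_one hx)
    _ ≤ M * (1 + β / α) ^ n := by
      linarith [hA.add_mul_sum_abs_le hα hβ.le hdiag hbound x hM]
    _ ≤ M * (2 * β / α) ^ n := by
      have : 1 ≤ β / α := (one_le_div hα).2 hαβ
      gcongr
      rw [mul_div_assoc]
      linarith

/-- Fix `α, β > 0` and `n ∈ ℕ`. Let `A ∈ ℝ^{n×n}` be a lower-triangular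
matrix with `|A_{ii}| ≥ α` for all `i` and `|A_{ij}| ≤ β` for all `i, j`. Then
`σ_min(A) ≥ (α/2) · (α/(β√n))^n`. -/
theorem lowerTriangular_least_singular_value (α β : ℝ) (hα : 0 < α) (hβ : 0 < β)
    (n : ℕ) (hn : 0 < n) (A : Matrix (Fin n) (Fin n) ℝ)
    (htri : ∀ i j : Fin n, i < j → A i j = 0)
    (hdiag : ∀ i : Fin n, α ≤ |A i i|)
    (hbound : ∀ i j : Fin n, |A i j| ≤ β) :
    α / 2 * (α / (β * Real.sqrt n)) ^ n ≤ sMin n A :=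
  lowerTriangular_least_singular_value_general α β hα n hn A htri hdiag hbound
end

section
/- Let H ∈ ℕ and δ ∈ (0, 1/2^{H+3}). Let e_i ~ CBer(i, δ) for i ∈ [H] and B_j ~ Ber(1/2) for j ∈ [H] all be independent, and define Z_{ij} = e_{ij} + B_j (mod 2) for all 1 ≤ j ≤ i ≤ H. Then for every realization z of Z and every b ∈ 𝔽₂^H: P[B = b | Z = z] ∈ [2^{-H} - 16δ, 2^{-H} + 16δ]. Moreover, for every h ∈ [H]: P[B_h = b_h | Z = z, B_{-h} = b_{-h}] ∈ [1/2 - 16δ·2^{H+1}, 1/2 + 16δ·2^{H+1}]. -/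
/-- The pmf of the `(n, δ)`-correlated Bernoulli distribution `CBer(n, δ)` on `𝔽₂ⁿ`:
the mixture `2δ · (point mass at 0) + (1 - 2δ) · Unif(𝔽₂ⁿ)`. -/
noncomputable def cberDensity (n : ℕ) (δ : ℝ) (x : Fin n → ZMod 2) : ℝ :=
  2 * δ * (if x = 0 then 1 else 0) + (1 - 2 * δ) * (1 / 2 : ℝ) ^ n

/-- The joint probability `P[B = b, Z = z]` where `B₁, ..., B_H ~ Ber(1/2)` i.i.d.,
`e_i ~ CBer(i, δ)` independently for each `i`, and `Z_{ij} = e_{ij} + B_j` for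
`(i,j) ∈ Γ(H) = {(i,j) : 1 ≤ j ≤ i ≤ H}` (coded 0-based: `i : Fin H`, `j : Fin (i+1)`).
Since `Z` and `B` determine `e = Z + B`, this is `(1/2)^H · Π_i CBer(i,δ)(z_{i,·} + b)`. -/
noncomputable def jointProb (H : ℕ) (δ : ℝ)
    (z : ((i : Fin H) × Fin (i.1 + 1)) → ZMod 2) (b : Fin H → ZMod 2) : ℝ :=
  (1 / 2 : ℝ) ^ H *
    ∏ i : Fin H, cberDensity (i.1 + 1) δ
      (fun j : Fin (i.1 + 1) =>
        z ⟨i, j⟩ + b ⟨j.1, Nat.lt_of_le_of_lt (Nat.lt_succ_iff.mp j.isLt) i.isLt⟩)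

/-!
Each factor `CBer(i, δ)(x)` of the joint density lies between its uniform part
`pᵢ = (1 - 2δ) 2^{-i}` and `pᵢ + 2δ`, so `P[B = b, Z = z]` lies between `K = 2^{-H} ∏ pᵢ` and
`K ∏ (1 + 2δ / pᵢ)`. The ratios `2δ / pᵢ = 2^{i+2} δ / (1 - 2δ)` sum to less than `(16/3) 2^H δ`,
hence the joint density equals the same constant `K` up to a factor `1 + 16 · 2^H δ`, uniformly
in `b`. Normalising over all `2^H` values of `b`, or over the two values of `b_h`, gives the bounds.
-/

open Finset

theorem prod_one_add_le_one_add_three_mul_sum {ι : Type*} (s : Finset ι) (a : ι → ℝ)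
    (ha : ∀ i ∈ s, 0 ≤ a i) (hs : ∑ i ∈ s, a i ≤ 2 / 3) :
    ∏ i ∈ s, (1 + a i) ≤ 1 + 3 * ∑ i ∈ s, a i := by
  induction s using Finset.cons_induction with
  | empty => simp
  | cons x t hx ih =>
    rw [prod_cons, sum_cons] at *
    have hx0 : 0 ≤ a x := ha x (mem_cons_self x t)
    have ht0 : ∀ i ∈ t, 0 ≤ a i := fun i hi => ha i (mem_cons_of_mem hi)
    have ht : 0 ≤ ∑ i ∈ t, a i := sum_nonneg ht0
    have ih' := mul_le_mul_of_nonneg_left (ih ht0 (by linarith)) (by linarith : 0 ≤ 1 + a x)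
    nlinarith

theorem div_sum_mem_Icc {α : Type*} (s : Finset α) (f : α → ℝ) {K E : ℝ} (hK : 0 < K)
    (hE : 0 ≤ E) (hf : ∀ x ∈ s, f x ∈ Set.Icc K ((1 + E) * K)) {a : α} (ha : a ∈ s) :
    f a / ∑ x ∈ s, f x ∈ Set.Icc ((1 - E) / #s) ((1 + E) / #s) := by
  have hN : (0 : ℝ) < #s := by exact_mod_cast card_pos.mpr ⟨a, ha⟩
  have hlo : #s * K ≤ ∑ x ∈ s, f x := by
    simpa using card_nsmul_le_sum s f K fun x hx => (hf x hx).1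
  have hhi : ∑ x ∈ s, f x ≤ #s * ((1 + E) * K) := by
    simpa using sum_le_card_nsmul s f _ fun x hx => (hf x hx).2
  have hS : 0 < ∑ x ∈ s, f x := lt_of_lt_of_le (by positivity) hlo
  obtain ⟨hfa_lo, hfa_hi⟩ := hf a ha
  constructor
  · rw [div_le_div_iff₀ hN hS]
    nlinarith [mul_le_mul_of_nonneg_left hhi (by positivity : (0 : ℝ) ≤ (1 - E) ^ 2 + E ^ 2),
      mul_nonneg (mul_nonneg hE hE) hK.le]
  · rw [div_le_div_iff₀ hS hN]
    nlinarith [mul_le_mul_of_nonneg_left hlo (by positivity : (0 : ℝ) ≤ 1 + E)]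

noncomputable def cberMin (n : ℕ) (δ : ℝ) : ℝ := (1 - 2 * δ) * (1 / 2 : ℝ) ^ n

theorem cberMin_pos (n : ℕ) {δ : ℝ} (hδ : δ < 1 / 2) : 0 < cberMin n δ :=
  mul_pos (by linarith) (by positivity)

theorem cberDensity_mem_Icc {δ : ℝ} (hδ : 0 ≤ δ) (n : ℕ) (x : Fin n → ZMod 2) :
    cberDensity n δ x ∈ Set.Icc (cberMin n δ) (cberMin n δ + 2 * δ) := by
  unfold cberDensity cberMin
  split_ifs <;> constructor <;> linarith

theorem sum_div_cberMin (H : ℕ) (δ : ℝ) (hδ : δ < 1 / 2) :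
    ∑ i : Fin H, 2 * δ / cberMin (i + 1) δ = 4 * δ * (2 ^ H - 1) / (1 - 2 * δ) := by
  have h2δ : 1 - 2 * δ ≠ 0 := by linarith
  have hterm (i : Fin H) : 2 * δ / cberMin (i + 1) δ = 4 * δ / (1 - 2 * δ) * 2 ^ (i : ℕ) := by
    unfold cberMin
    rw [one_div, inv_pow]
    field_simp
    ring
  rw [sum_congr rfl fun i _ => hterm i, ← mul_sum, Fin.sum_univ_eq_sum_range (2 ^ ·),
    geom_sum_eq (by norm_num : (2 : ℝ) ≠ 1)]
  field_simp
  ring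

theorem lt_half_of_eight_mul_two_pow_mul_le {H : ℕ} {δ : ℝ} (hδ : 8 * 2 ^ H * δ ≤ 1) :
    δ < 1 / 2 := by
  nlinarith [one_le_pow₀ (M₀ := ℝ) (n := H) (a := 2) (by norm_num)]

theorem prod_cberMin_add_le {H : ℕ} {δ : ℝ} (hδ0 : 0 ≤ δ) (hδ : 8 * 2 ^ H * δ ≤ 1) :
    ∏ i : Fin H, (cberMin (i + 1) δ + 2 * δ)
      ≤ (1 + 16 * 2 ^ H * δ) * ∏ i : Fin H, cberMin (i + 1) δ := by
  have h1 : (1 : ℝ) ≤ 2 ^ H := one_le_pow₀ (by norm_num)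
  have hδ8 : δ ≤ 1 / 8 := by nlinarith
  have hpos (i : Fin H) : 0 < cberMin (i + 1) δ :=
    cberMin_pos _ (lt_half_of_eight_mul_two_pow_mul_le hδ)
  have hfactor (i : Fin H) :
      cberMin (i + 1) δ + 2 * δ = cberMin (i + 1) δ * (1 + 2 * δ / cberMin (i + 1) δ) := by
    field_simp [(hpos i).ne']
  set S := ∑ i : Fin H, 2 * δ / cberMin (i + 1) δ with hS
  have hS_mul : S * (1 - 2 * δ) = 4 * δ * (2 ^ H - 1) := by
    rw [hS, sum_div_cberMin H δ (by linarith), div_mul_cancel₀ _ (by linarith)]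
  have hS0 : 0 ≤ S := sum_nonneg fun i _ => div_nonneg (by linarith) (hpos i).le
  have hS3 : 3 * S ≤ 16 * 2 ^ H * δ := by nlinarith
  calc ∏ i : Fin H, (cberMin (i + 1) δ + 2 * δ)
      = (∏ i : Fin H, cberMin (i + 1) δ) * ∏ i : Fin H, (1 + 2 * δ / cberMin (i + 1) δ) := by
        rw [← prod_mul_distrib]; exact prod_congr rfl fun i _ => hfactor i
    _ ≤ (∏ i : Fin H, cberMin (i + 1) δ) * (1 + 3 * S) := by
        refine mul_le_mul_of_nonneg_left ?_ (prod_pos fun i _ => hpos i).le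
        exact prod_one_add_le_one_add_three_mul_sum _ _
          (fun i _ => div_nonneg (by linarith) (hpos i).le) (by nlinarith)
    _ ≤ (1 + 16 * 2 ^ H * δ) * ∏ i : Fin H, cberMin (i + 1) δ := by
        rw [mul_comm]
        exact mul_le_mul_of_nonneg_right (by linarith) (prod_pos fun i _ => hpos i).le

noncomputable def jointProbMin (H : ℕ) (δ : ℝ) : ℝ :=
  (1 / 2 : ℝ) ^ H * ∏ i : Fin H, cberMin (i + 1) δ

theorem jointProbMin_pos {H : ℕ} {δ : ℝ} (hδ : δ < 1 / 2) : 0 < jointProbMin H δ :=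
  mul_pos (by positivity) (prod_pos fun i _ => cberMin_pos _ hδ)

theorem jointProb_mem_Icc {H : ℕ} {δ : ℝ} (hδ0 : 0 ≤ δ) (hδ : 8 * 2 ^ H * δ ≤ 1)
    (z : ((i : Fin H) × Fin (i.1 + 1)) → ZMod 2) (b : Fin H → ZMod 2) :
    jointProb H δ z b ∈ Set.Icc (jointProbMin H δ) ((1 + 16 * 2 ^ H * δ) * jointProbMin H δ) := by
  have hmin (i : Fin H) : 0 ≤ cberMin (i + 1) δ :=
    (cberMin_pos _ (lt_half_of_eight_mul_two_pow_mul_le hδ)).le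
  unfold jointProb jointProbMin
  constructor
  · gcongr
    · exact fun i _ => hmin i
    · exact (cberDensity_mem_Icc hδ0 _ _).1
  · calc _ ≤ (1 / 2 : ℝ) ^ H * ∏ i : Fin H, (cberMin (i + 1) δ + 2 * δ) := by
          gcongr
          · exact fun i _ => (hmin i).trans (cberDensity_mem_Icc hδ0 _ _).1
          · exact (cberDensity_mem_Icc hδ0 _ _).2
      _ ≤ (1 / 2 : ℝ) ^ H * ((1 + 16 * 2 ^ H * δ) * ∏ i : Fin H, cberMin (i + 1) δ) := by
          gcongr
          exact prod_cberMin_add_le hδ0 hδ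
      _ = _ := by ring

/-- Let `H ∈ ℕ` and `δ ∈ (0, 1/2^{H+3})`. With `e_i ~ CBer(i, δ)`,
`B_j ~ Ber(1/2)` all independent, and `Z_{ij} = e_{ij} + B_j` for `(i,j) ∈ Γ(H)`:
for every realization `z` of `Z` and every `b ∈ 𝔽₂^H`,
`P[B = b | Z = z] ∈ [2^{-H} - 16δ, 2^{-H} + 16δ]`; moreover for every `h ∈ [H]`,
`P[B_h = b_h | Z = z, B_{-h} = b_{-h}] ∈ [1/2 - 16δ·2^{H+1}, 1/2 + 16δ·2^{H+1}]`. -/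
theorem conditional_latent_near_uniform (H : ℕ) (δ : ℝ)
    (hδ : δ ∈ Set.Ioo (0 : ℝ) (1 / 2 ^ (H + 3)))
    (z : ((i : Fin H) × Fin (i.1 + 1)) → ZMod 2) (b : Fin H → ZMod 2) :
    (jointProb H δ z b / ∑ b' : Fin H → ZMod 2, jointProb H δ z b')
        ∈ Set.Icc ((1 / 2 : ℝ) ^ H - 16 * δ) ((1 / 2 : ℝ) ^ H + 16 * δ)
      ∧ ∀ h : Fin H,
        (jointProb H δ z b /
            (jointProb H δ z b + jointProb H δ z (Function.update b h (b h + 1))))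
          ∈ Set.Icc (1 / 2 - 16 * δ * 2 ^ (H + 1)) (1 / 2 + 16 * δ * 2 ^ (H + 1)) := by
  obtain ⟨hδ0, hδ1⟩ := hδ
  have hδ : 8 * 2 ^ H * δ ≤ 1 := by
    rw [lt_div_iff₀ (by positivity), pow_add] at hδ1; linarith
  have hK := jointProbMin_pos (H := H) (lt_half_of_eight_mul_two_pow_mul_le hδ)
  have hE : 0 ≤ 16 * 2 ^ H * δ := by positivity
  have hJ : ∀ b', jointProb H δ z b' ∈ Set.Icc _ _ := jointProb_mem_Icc hδ0.le hδ z
  constructor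
  · have hall := div_sum_mem_Icc univ _ hK hE (fun x _ => hJ x) (mem_univ b)
    have hcard : (#(univ : Finset (Fin H → ZMod 2)) : ℝ) = 2 ^ H := by simp
    rw [hcard] at hall
    rw [one_div_pow]
    convert hall using 2 <;> field_simp
  · intro h
    have hne : b ≠ Function.update b h (b h + 1) := fun hb => by simpa using congrFun hb h
    have hpair := div_sum_mem_Icc {b, Function.update b h (b h + 1)} _ hK hE
      (fun x _ => hJ x) (mem_insert_self _ _)
    rw [sum_pair hne, card_pair hne] at hpair
    refine Set.Icc_subset_Icc ?_ ?_ hpair <;> push_cast <;> rw [pow_succ] <;> linarith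
end

section
/- Let H ∈ ℕ and δ ∈ (0, 1/2^{H+3}). Let e_i ~ CBer(i, δ) for i ∈ [H] and B_j ~ Ber(1/2) for j ∈ [H] be independent, and let Z ∈ 𝔽₂^{Γ(H)} be defined by Z_{ij} = e_{ij} + B_j (mod 2). Then for any index (ĩ, ĵ) ∈ Γ(H) and any z ∈ 𝔽₂^{Γ(H)}: |P[Z_{ĩĵ} = 1 | Z_{ij} = z_{ij} for all (i,j) ≠ (ĩ, ĵ)] - 1/2| ≤ 2^{2H+4} δ². -/
lemma aux_prod_diff {ι : Type*} [DecidableEq ι] (M : ι → ℝ) (s : Finset ι) :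
    ∀ (g h : ι → ℝ), (∀ i ∈ s, 0 ≤ g i ∧ g i ≤ M i) → (∀ i ∈ s, 0 ≤ h i ∧ h i ≤ M i) →
    |∏ i ∈ s, g i - ∏ i ∈ s, h i| ≤ ∑ i ∈ s, |g i - h i| * ∏ k ∈ s.erase i, M k := by
  induction s using Finset.cons_induction with
  | empty => intro g h _ _; simp
  | cons a s ha ih =>
    intro g h hg hh
    have hga := hg a (Finset.mem_cons_self a s)
    have hha := hh a (Finset.mem_cons_self a s)
    have hgs : ∀ i ∈ s, 0 ≤ g i ∧ g i ≤ M i := fun i hi => hg i (Finset.mem_cons_of_mem hi)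
    have hhs : ∀ i ∈ s, 0 ≤ h i ∧ h i ≤ M i := fun i hi => hh i (Finset.mem_cons_of_mem hi)
    have hPg : (0:ℝ) ≤ ∏ i ∈ s, g i := Finset.prod_nonneg fun i hi => (hgs i hi).1
    have hPh : (0:ℝ) ≤ ∏ i ∈ s, h i := Finset.prod_nonneg fun i hi => (hhs i hi).1
    have hPhM : ∏ i ∈ s, h i ≤ ∏ i ∈ s, M i :=
      Finset.prod_le_prod (fun i hi => (hhs i hi).1) (fun i hi => (hhs i hi).2)
    rw [Finset.prod_cons, Finset.prod_cons, Finset.sum_cons, Finset.erase_cons]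
    have step1 : |g a * ∏ i ∈ s, g i - h a * ∏ i ∈ s, h i| ≤
        g a * |∏ i ∈ s, g i - ∏ i ∈ s, h i| + |g a - h a| * ∏ i ∈ s, h i := by
      have : g a * ∏ i ∈ s, g i - h a * ∏ i ∈ s, h i =
          g a * (∏ i ∈ s, g i - ∏ i ∈ s, h i) + (g a - h a) * ∏ i ∈ s, h i := by ring
      rw [this]
      refine (abs_add_le _ _).trans ?_
      rw [abs_mul, abs_mul, abs_of_nonneg hga.1, abs_of_nonneg hPh]
    refine step1.trans ?_
    have step2 : g a * |∏ i ∈ s, g i - ∏ i ∈ s, h i| ≤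
        M a * ∑ i ∈ s, |g i - h i| * ∏ k ∈ s.erase i, M k := by
      apply mul_le_mul hga.2 (ih g h hgs hhs) (abs_nonneg _) (hga.1.trans hga.2)
    have step3 : M a * ∑ i ∈ s, |g i - h i| * ∏ k ∈ s.erase i, M k =
        ∑ i ∈ s, |g i - h i| * ∏ k ∈ (Finset.cons a s ha).erase i, M k := by
      rw [Finset.mul_sum]
      refine Finset.sum_congr rfl fun i hi => ?_
      have hia : i ≠ a := fun h => ha (h ▸ hi)
      have : (Finset.cons a s ha).erase i = Finset.cons a (s.erase i) (fun h => ha (Finset.mem_of_mem_erase h)) := by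
        ext x
        simp only [Finset.mem_erase, Finset.mem_cons]
        constructor
        · rintro ⟨hx, hx' | hx'⟩
          · exact Or.inl hx'
          · exact Or.inr ⟨hx, hx'⟩
        · rintro (hx | ⟨hx, hx'⟩)
          · exact ⟨hx ▸ hia.symm, Or.inl hx⟩
          · exact ⟨hx, Or.inr hx'⟩
      rw [this, Finset.prod_cons]
      ring
    rw [step3] at step2
    have step4 : |g a - h a| * ∏ i ∈ s, h i ≤ |g a - h a| * ∏ i ∈ s, M i :=
      mul_le_mul_of_nonneg_left hPhM (abs_nonneg _)
    linarith

lemma aux_prod_le {ι : Type*} (c : ι → ℝ) (d : ℝ) (hd : 0 ≤ d) (s : Finset ι) :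
    (∀ i ∈ s, 0 < c i) →
    (∏ i ∈ s, (c i + d)) * (1 - ∑ i ∈ s, d / c i) ≤ ∏ i ∈ s, c i := by
  induction s using Finset.cons_induction with
  | empty => simp
  | cons a s ha ih =>
    intro hc
    have hca : 0 < c a := hc a (Finset.mem_cons_self a s)
    have hcs : ∀ i ∈ s, 0 < c i := fun i hi => hc i (Finset.mem_cons_of_mem hi)
    have ihs := ih hcs
    have hP : (0:ℝ) ≤ ∏ i ∈ s, (c i + d) :=
      Finset.prod_nonneg fun i hi => by have := hcs i hi; linarith
    have hS : (0:ℝ) ≤ ∑ i ∈ s, d / c i :=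
      Finset.sum_nonneg fun i hi => div_nonneg hd (hcs i hi).le
    rw [Finset.prod_cons, Finset.prod_cons, Finset.sum_cons]
    have hq : d / c a * c a = d := div_mul_cancel₀ d hca.ne'
    have key : (c a + d) * (1 - (d / c a + ∑ i ∈ s, d / c i)) ≤
        c a * (1 - ∑ i ∈ s, d / c i) := by
      have hq0 : 0 ≤ d / c a := div_nonneg hd hca.le
      nlinarith [mul_nonneg hd hS, mul_nonneg hd hq0]
    calc ((c a + d) * ∏ i ∈ s, (c i + d)) * (1 - (d / c a + ∑ i ∈ s, d / c i))
        = (∏ i ∈ s, (c i + d)) * ((c a + d) * (1 - (d / c a + ∑ i ∈ s, d / c i))) := by ring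
      _ ≤ (∏ i ∈ s, (c i + d)) * (c a * (1 - ∑ i ∈ s, d / c i)) :=
          mul_le_mul_of_nonneg_left key hP
      _ = c a * ((∏ i ∈ s, (c i + d)) * (1 - ∑ i ∈ s, d / c i)) := by ring
      _ ≤ c a * ∏ i ∈ s, c i := mul_le_mul_of_nonneg_left ihs hca.le

set_option maxHeartbeats 2000000 in
/-- Let `H ∈ ℕ` and `δ ∈ (0, 1/2^{H+3})`, and let `Z` on `𝔽₂^{Γ(H)}`
be as above. Then for any index `t = (ĩ, ĵ) ∈ Γ(H)` and any `z ∈ 𝔽₂^{Γ(H)}`,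
`|P[Z_t = 1 | Z_{t'} = z_{t'} ∀ t' ≠ t] - 1/2| ≤ 2^{2H+4} δ²`
(the joint noise distribution is a `2^{2H+4}δ²`-Santha–Vazirani source). -/
theorem noise_santha_vazirani (H : ℕ) (δ : ℝ)
    (hδ : δ ∈ Set.Ioo (0 : ℝ) (1 / 2 ^ (H + 3)))
    (t : (i : Fin H) × Fin (i.1 + 1))
    (z : ((i : Fin H) × Fin (i.1 + 1)) → ZMod 2) :
    |(∑ b : Fin H → ZMod 2, jointProb H δ (Function.update z t 1) b) /
        ((∑ b : Fin H → ZMod 2, jointProb H δ (Function.update z t 0) b) +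
          (∑ b : Fin H → ZMod 2, jointProb H δ (Function.update z t 1) b)) - 1 / 2|
      ≤ 2 ^ (2 * H + 4) * δ ^ 2 := by
  obtain ⟨hδ0, hδu⟩ := hδ
  -- basic numerics
  have h2H : (0:ℝ) < 2 ^ H := by positivity
  have hδ8 : δ ≤ 1/8 := by
    have h1 : (8:ℝ) ≤ 2 ^ (H+3) := by
      calc (8:ℝ) = 2^3 := by norm_num
      _ ≤ 2^(H+3) := by
        apply pow_le_pow_right₀ (by norm_num) (by omega)
    have h2 : (1:ℝ) / 2 ^ (H+3) ≤ 1 / 8 := by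
      apply one_div_le_one_div_of_le (by norm_num) h1
    linarith [hδu]
  -- definitions
  set emb : (i : Fin H) → Fin (i.1+1) → Fin H :=
    fun i j => ⟨j.1, Nat.lt_of_le_of_lt (Nat.lt_succ_iff.mp j.isLt) i.isLt⟩ with hemb
  set f : (((i : Fin H) × Fin (i.1 + 1)) → ZMod 2) → Fin H → (Fin H → ZMod 2) → ℝ :=
    fun w i b => cberDensity (i.1+1) δ (fun j => w ⟨i,j⟩ + b (emb i j)) with hf
  have hjoint : ∀ w b, jointProb H δ w b = (1/2:ℝ)^H * ∏ i, f w i b := fun w b => rfl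
  set c : Fin H → ℝ := fun i => (1 - 2*δ) * (1/2:ℝ)^(i.1+1) with hcdef
  set M : Fin H → ℝ := fun i => 2*δ + c i with hMdef
  have hc_pos : ∀ i, 0 < c i := by
    intro i; simp only [hcdef]
    apply mul_pos (by linarith) (by positivity)
  have hcM : ∀ i, c i ≤ M i := fun i => by simp only [hMdef]; linarith
  have hM_pos : ∀ i, 0 < M i := fun i => lt_of_lt_of_le (hc_pos i) (hcM i)
  have hf_bounds : ∀ w i b, c i ≤ f w i b ∧ f w i b ≤ M i := by
    intro w i b
    simp only [hf, hMdef, hcdef, cberDensity]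
    split_ifs <;> constructor <;> nlinarith [hδ0]
  have hf_diff : ∀ w i b b', |f w i b - f w i b'| ≤ 2*δ := by
    intro w i b b'
    have h2 : (0:ℝ) ≤ 2*δ := by linarith
    simp only [hf, cberDensity]
    split_ifs
    · simp only [sub_self, abs_zero]; linarith
    · rw [show 2*δ*1 + (1-2*δ)*(1/2:ℝ)^(i.1+1) - (2*δ*0 + (1-2*δ)*(1/2:ℝ)^(i.1+1)) = 2*δ by ring,
        abs_of_nonneg h2]
    · rw [show 2*δ*0 + (1-2*δ)*(1/2:ℝ)^(i.1+1) - (2*δ*1 + (1-2*δ)*(1/2:ℝ)^(i.1+1)) = -(2*δ) by ring,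
        abs_neg, abs_of_nonneg h2]
    · simp only [sub_self, abs_zero]; linarith
  -- the flip map
  set jH : Fin H := emb t.1 t.2 with hjH
  set σ : (Fin H → ZMod 2) → (Fin H → ZMod 2) := fun b => Function.update b jH (b jH + 1) with hσ
  have hσσ : Function.Involutive σ := by
    intro b; funext k
    by_cases hk : k = jH
    · subst hk
      simp only [hσ, Function.update_self]
      have h11 : (1:ZMod 2) + 1 = 0 := by decide
      rw [add_assoc, h11, add_zero]
    · simp only [hσ, Function.update_of_ne hk]
  have hσbij : Function.Bijective σ := hσσ.bijective
  have hf_ne : ∀ (v : ZMod 2) (i : Fin H), i ≠ t.1 → ∀ b,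
      f (Function.update z t v) i b = f z i b := by
    intro v i hi b
    simp only [hf]
    congr 1
    funext j
    rw [Function.update_of_ne (fun h => hi (congrArg Sigma.fst h))]
  have hf_key : ∀ b, f (Function.update z t 1) t.1 b = f (Function.update z t 0) t.1 (σ b) := by
    intro b
    simp only [hf]
    congr 1
    funext j
    by_cases hj : j = t.2
    · have h1 : (⟨t.1, j⟩ : (i : Fin H) × Fin (i.1+1)) = t := by
        rw [hj]
      rw [h1, Function.update_self, Function.update_self]
      have he : emb t.1 j = jH := by rw [hjH, hj]
      rw [he]
      simp only [hσ, Function.update_self]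
      rw [zero_add, add_comm]
    · have h1 : (⟨t.1, j⟩ : (i : Fin H) × Fin (i.1+1)) ≠ t := by
        intro h
        apply hj
        have h2 := (Sigma.mk.inj_iff.mp (h.trans (Sigma.eta t).symm)).2
        exact eq_of_heq h2
      rw [Function.update_of_ne h1, Function.update_of_ne h1]
      congr 1
      have he : emb t.1 j ≠ jH := by
        intro h
        apply hj
        have hval : (emb t.1 j).1 = jH.1 := congrArg Fin.val h
        exact Fin.ext hval
      simp only [hσ, Function.update_of_ne he]
  -- product decomposition
  set P : (Fin H → ZMod 2) → ℝ := fun b => ∏ i ∈ Finset.univ.erase t.1, f z i b with hP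
  have hprod : ∀ (v : ZMod 2) b, (∏ i, f (Function.update z t v) i b)
      = f (Function.update z t v) t.1 b * P b := by
    intro v b
    rw [← Finset.mul_prod_erase Finset.univ _ (Finset.mem_univ t.1)]
    congr 1
    exact Finset.prod_congr rfl fun i hi => hf_ne v i (Finset.ne_of_mem_erase hi) b
  set S0 : ℝ := ∑ b : Fin H → ZMod 2, ∏ i, f (Function.update z t 0) i b with hS0def
  set S1 : ℝ := ∑ b : Fin H → ZMod 2, ∏ i, f (Function.update z t 1) i b with hS1def
  set I : (Fin H → ZMod 2) → ℝ := fun b => f (Function.update z t 0) t.1 b - c t.1 with hI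
  have hIbounds : ∀ b, 0 ≤ I b ∧ I b ≤ 2*δ := by
    intro b
    have h := hf_bounds (Function.update z t 0) t.1 b
    have hM' : M t.1 = 2*δ + c t.1 := by simp only [hMdef]
    constructor
    · simp only [hI]; linarith [h.1]
    · simp only [hI]; linarith [h.2, hM'.le]
  have hS1alt : S1 = ∑ b : Fin H → ZMod 2, (c t.1 + I b) * P (σ b) := by
    rw [hS1def]
    rw [← Fintype.sum_bijective σ hσbij _ _ (fun b => rfl)]
    refine Finset.sum_congr rfl fun b _ => ?_
    rw [hprod 1 (σ b)]
    congr 1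
    rw [show f (Function.update z t 1) t.1 (σ b) = f (Function.update z t 0) t.1 (σ (σ b)) from hf_key (σ b), hσσ b]
    simp only [hI]; ring
  have hS0alt : S0 = ∑ b : Fin H → ZMod 2, (c t.1 + I b) * P b := by
    rw [hS0def]
    refine Finset.sum_congr rfl fun b _ => ?_
    rw [hprod 0 b]
    congr 1
    simp only [hI]; ring
  have hPσ : ∑ b : Fin H → ZMod 2, P (σ b) = ∑ b : Fin H → ZMod 2, P b :=
    Fintype.sum_bijective σ hσbij _ _ (fun b => rfl)
  have hdiff : S1 - S0 = ∑ b : Fin H → ZMod 2, I b * (P (σ b) - P b) := by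
    rw [hS1alt, hS0alt]
    have e1 : ∀ (Q : (Fin H → ZMod 2) → ℝ), ∑ b : Fin H → ZMod 2, (c t.1 + I b) * Q b
        = c t.1 * ∑ b : Fin H → ZMod 2, Q b + ∑ b : Fin H → ZMod 2, I b * Q b := by
      intro Q
      rw [Finset.mul_sum, ← Finset.sum_add_distrib]
      exact Finset.sum_congr rfl fun b _ => by ring
    rw [e1, e1, hPσ]
    rw [show ∀ x y w : ℝ, x + y - (x + w) = y - w from fun x y w => by ring]
    rw [← Finset.sum_sub_distrib]
    exact Finset.sum_congr rfl fun b _ => by ring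
  -- numeric prerequisites
  have hcard : (Fintype.card (Fin H → ZMod 2) : ℝ) = 2^H := by
    rw [Fintype.card_fun]
    simp
  set Pc : ℝ := ∏ i, c i with hPc
  have hPc_pos : 0 < Pc := Finset.prod_pos fun i _ => hc_pos i
  set D : ℝ := ∑ i ∈ Finset.univ.erase t.1, (2*δ) * ∏ k ∈ (Finset.univ.erase t.1).erase i, M k with hD
  have hD_nonneg : 0 ≤ D := Finset.sum_nonneg fun i _ => by
    apply mul_nonneg (by linarith)
    exact Finset.prod_nonneg fun k _ => (hM_pos k).le
  have hPdiff : ∀ b, |P (σ b) - P b| ≤ D := by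
    intro b
    refine (aux_prod_diff M _ (fun i => f z i (σ b)) (fun i => f z i b) ?_ ?_).trans ?_
    · intro i _
      exact ⟨(hc_pos i).le.trans (hf_bounds z i (σ b)).1, (hf_bounds z i (σ b)).2⟩
    · intro i _
      exact ⟨(hc_pos i).le.trans (hf_bounds z i b).1, (hf_bounds z i b).2⟩
    · refine Finset.sum_le_sum fun i _ => ?_
      exact mul_le_mul_of_nonneg_right (hf_diff z i (σ b) b)
        (Finset.prod_nonneg fun k _ => (hM_pos k).le)
  have habsS : |S1 - S0| ≤ 2^H * (2*δ * D) := by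
    rw [hdiff]
    refine (Finset.abs_sum_le_sum_abs _ _).trans ?_
    have hb : ∀ b : Fin H → ZMod 2, |I b * (P (σ b) - P b)| ≤ 2*δ * D := by
      intro b
      rw [abs_mul, abs_of_nonneg (hIbounds b).1]
      exact mul_le_mul (hIbounds b).2 (hPdiff b) (abs_nonneg _) (by linarith)
    refine (Finset.sum_le_sum fun b _ => hb b).trans ?_
    rw [Finset.sum_const, Finset.card_univ, nsmul_eq_mul, hcard]
  -- geometric sum bound
  have hgeo : ∑ i : Fin H, (2:ℝ)^((i:ℕ)+1) ≤ 2^H * 2 := by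
    rw [Fin.sum_univ_eq_sum_range (fun n => (2:ℝ)^(n+1)) H]
    have e2 : ∀ n, (2:ℝ)^(n+1) = 2 * 2^n := fun n => by rw [pow_succ]; ring
    calc ∑ n ∈ Finset.range H, (2:ℝ)^(n+1) = 2 * ∑ n ∈ Finset.range H, (2:ℝ)^n := by
          rw [Finset.mul_sum]; exact Finset.sum_congr rfl fun n _ => e2 n
      _ = 2 * ((2^H - 1)/(2-1)) := by rw [geom_sum_eq (by norm_num : (2:ℝ) ≠ 1) H]
      _ ≤ 2^H * 2 := by norm_num; nlinarith [h2H]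
  have hδ2H : δ * 2^H < 1/8 := by
    have h1 : δ * 2^H < (1/2^(H+3)) * 2^H := mul_lt_mul_of_pos_right hδu h2H
    have h2 : (1/(2:ℝ)^(H+3)) * 2^H = 1/8 := by
      rw [pow_add]
      field_simp
      ring
    linarith [h1, h2.le, h2.ge]
  -- sum of reciprocals bound
  have hsum23 : ∑ i : Fin H, (2*δ) / c i ≤ 2/3 := by
    have h12 : (1:ℝ) - 2*δ ≠ 0 := by linarith
    have e : ∀ i : Fin H, (2*δ) / c i = (2*δ/(1-2*δ)) * 2^((i:ℕ)+1) := by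
      intro i
      simp only [hcdef]
      rw [one_div, inv_pow]
      field_simp
    rw [Finset.sum_congr rfl fun i _ => e i, ← Finset.mul_sum]
    have hfrac : 0 ≤ 2*δ/(1-2*δ) := by
      apply div_nonneg (by linarith) (by linarith)
    calc (2*δ/(1-2*δ)) * ∑ i : Fin H, (2:ℝ)^((i:ℕ)+1)
        ≤ (2*δ/(1-2*δ)) * (2^H * 2) := mul_le_mul_of_nonneg_left hgeo hfrac
      _ ≤ 2/3 := by
          rw [div_mul_eq_mul_div, div_le_iff₀ (by linarith : (0:ℝ) < 1 - 2*δ)]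
          nlinarith [hδ2H]
  -- product of M bound
  have hprodM : ∏ i, M i ≤ 3 * Pc := by
    have haux := aux_prod_le c (2*δ) (by linarith) Finset.univ (fun i _ => hc_pos i)
    have h1 : ∏ i, (c i + 2*δ) = ∏ i, M i :=
      Finset.prod_congr rfl fun i _ => by simp only [hMdef]; ring
    rw [h1] at haux
    have hPM : 0 ≤ ∏ i, M i := Finset.prod_nonneg fun i _ => (hM_pos i).le
    have h2 : (∏ i, M i) * (∑ i : Fin H, (2*δ) / c i) ≤ (∏ i, M i) * (2/3) :=
      mul_le_mul_of_nonneg_left hsum23 hPM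
    have h3 : (∏ i, M i) * (1 - ∑ i : Fin H, (2*δ)/c i)
        = (∏ i, M i) - (∏ i, M i) * (∑ i : Fin H, (2*δ)/c i) := by ring
    rw [h3] at haux
    linarith [haux, h2]
  -- per-term bound for D
  have h2pow_t : (2:ℝ)^((t.1:ℕ)+1) ≤ 2^H := by
    apply pow_le_pow_right₀ (by norm_num)
    exact t.1.isLt
  have hterm : ∀ i ∈ Finset.univ.erase t.1,
      (2*δ) * ∏ k ∈ (Finset.univ.erase t.1).erase i, M k
        ≤ (32/3)*δ*Pc*2^((i:ℕ)+1)*2^H := by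
    intro i hi
    set X : ℝ := ∏ k ∈ (Finset.univ.erase t.1).erase i, M k with hX
    have hX0 : 0 ≤ X := Finset.prod_nonneg fun k _ => (hM_pos k).le
    have hXM : M t.1 * (M i * X) = ∏ k, M k := by
      rw [Finset.mul_prod_erase (Finset.univ.erase t.1) M hi,
        Finset.mul_prod_erase Finset.univ M (Finset.mem_univ t.1)]
    have hXbound : X * (c i * c t.1) ≤ 3 * Pc := by
      have h1 : X * (c i * c t.1) ≤ X * (M i * M t.1) := by
        apply mul_le_mul_of_nonneg_left _ hX0
        exact mul_le_mul (hcM i) (hcM t.1) (hc_pos t.1).le (hM_pos i).le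
      have h2 : X * (M i * M t.1) = ∏ k, M k := by rw [← hXM]; ring
      rw [h2] at h1
      exact h1.trans hprodM
    have hpi : ((1/2:ℝ))^((i:ℕ)+1) * 2^((i:ℕ)+1) = 1 := by
      rw [one_div, inv_pow, inv_mul_cancel₀ (by positivity)]
    have hpt : ((1/2:ℝ))^((t.1:ℕ)+1) * 2^((t.1:ℕ)+1) = 1 := by
      rw [one_div, inv_pow, inv_mul_cancel₀ (by positivity)]
    have h1k : (1:ℝ) ≤ (c i * c t.1) * ((16/9)*2^((i:ℕ)+1)*2^((t.1:ℕ)+1)) := by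
      have expand : (c i * c t.1) * ((16/9)*2^((i:ℕ)+1)*2^((t.1:ℕ)+1))
          = (1-2*δ)^2 * (16/9) * (((1/2:ℝ))^((i:ℕ)+1) * 2^((i:ℕ)+1))
              * (((1/2:ℝ))^((t.1:ℕ)+1) * 2^((t.1:ℕ)+1)) := by
        simp only [hcdef]; ring
      rw [expand, hpi, hpt]
      nlinarith [hδ8, hδ0]
    have hk0 : (0:ℝ) ≤ (16/9)*2^((i:ℕ)+1)*2^((t.1:ℕ)+1) := by positivity
    have hXle : X ≤ (3*Pc) * ((16/9)*2^((i:ℕ)+1)*2^((t.1:ℕ)+1)) := by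
      calc X = X * 1 := by ring
        _ ≤ X * ((c i * c t.1) * ((16/9)*2^((i:ℕ)+1)*2^((t.1:ℕ)+1))) :=
            mul_le_mul_of_nonneg_left h1k hX0
        _ = (X * (c i * c t.1)) * ((16/9)*2^((i:ℕ)+1)*2^((t.1:ℕ)+1)) := by ring
        _ ≤ (3*Pc) * ((16/9)*2^((i:ℕ)+1)*2^((t.1:ℕ)+1)) :=
            mul_le_mul_of_nonneg_right hXbound hk0
    calc (2*δ) * X ≤ (2*δ) * ((3*Pc) * ((16/9)*2^((i:ℕ)+1)*2^((t.1:ℕ)+1))) :=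
          mul_le_mul_of_nonneg_left hXle (by linarith)
      _ = (32/3)*δ*Pc*2^((i:ℕ)+1)*2^((t.1:ℕ)+1) := by ring
      _ ≤ (32/3)*δ*Pc*2^((i:ℕ)+1)*2^H := by
          apply mul_le_mul_of_nonneg_left h2pow_t
          positivity
  have hDle : D ≤ (64/3)*δ*Pc*2^H*2^H := by
    rw [hD]
    refine (Finset.sum_le_sum hterm).trans ?_
    have h1 : ∑ i ∈ Finset.univ.erase t.1, (32/3)*δ*Pc*2^((i:ℕ)+1)*2^H
        = ((32/3)*δ*Pc*2^H) * ∑ i ∈ Finset.univ.erase t.1, (2:ℝ)^((i:ℕ)+1) := by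
      rw [Finset.mul_sum]
      exact Finset.sum_congr rfl fun i _ => by ring
    rw [h1]
    have h2 : ∑ i ∈ Finset.univ.erase t.1, (2:ℝ)^((i:ℕ)+1) ≤ 2^H * 2 := by
      refine le_trans ?_ hgeo
      apply Finset.sum_le_sum_of_subset_of_nonneg (Finset.erase_subset _ _)
      intro i _ _; positivity
    calc ((32/3)*δ*Pc*2^H) * ∑ i ∈ Finset.univ.erase t.1, (2:ℝ)^((i:ℕ)+1)
        ≤ ((32/3)*δ*Pc*2^H) * (2^H * 2) := by
          apply mul_le_mul_of_nonneg_left h2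
          positivity
      _ = (64/3)*δ*Pc*2^H*2^H := by ring
  -- lower bounds for S0, S1
  have hSlow : ∀ (v : ZMod 2), 2^H * Pc ≤ ∑ b : Fin H → ZMod 2, ∏ i, f (Function.update z t v) i b := by
    intro v
    have hb : ∀ b : Fin H → ZMod 2, Pc ≤ ∏ i, f (Function.update z t v) i b := by
      intro b
      exact Finset.prod_le_prod (fun i _ => (hc_pos i).le)
        (fun i _ => (hf_bounds (Function.update z t v) i b).1)
    calc (2:ℝ)^H * Pc = ∑ _b : Fin H → ZMod 2, Pc := by
          rw [Finset.sum_const, Finset.card_univ, nsmul_eq_mul, hcard]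
      _ ≤ _ := Finset.sum_le_sum fun b _ => hb b
  have hS0low : 2^H * Pc ≤ S0 := by rw [hS0def]; exact hSlow 0
  have hS1low : 2^H * Pc ≤ S1 := by rw [hS1def]; exact hSlow 1
  have hSpos : 0 < S0 + S1 := by nlinarith [hS0low, hS1low, mul_pos h2H hPc_pos]
  -- assemble
  have hT0 : ∑ b : Fin H → ZMod 2, jointProb H δ (Function.update z t 0) b = (1/2:ℝ)^H * S0 := by
    rw [hS0def, Finset.mul_sum]
    exact Finset.sum_congr rfl fun b _ => hjoint _ b
  have hT1 : ∑ b : Fin H → ZMod 2, jointProb H δ (Function.update z t 1) b = (1/2:ℝ)^H * S1 := by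
    rw [hS1def, Finset.mul_sum]
    exact Finset.sum_congr rfl fun b _ => hjoint _ b
  rw [hT0, hT1]
  have hq : (0:ℝ) < (1/2:ℝ)^H := by positivity
  have hratio : ((1/2:ℝ)^H * S1) / ((1/2:ℝ)^H * S0 + (1/2:ℝ)^H * S1) = S1 / (S0 + S1) := by
    rw [← mul_add, mul_div_mul_left _ _ (ne_of_gt hq)]
  rw [hratio]
  have heq : S1/(S0+S1) - 1/2 = (S1-S0)/(2*(S0+S1)) := by
    field_simp
    ring
  rw [heq, abs_div, abs_of_pos (by linarith : (0:ℝ) < 2*(S0+S1))]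
  have hnumle : |S1 - S0| ≤ (128/3)*δ^2*Pc*2^H*2^H*2^H := by
    refine habsS.trans ?_
    calc (2:ℝ)^H * (2*δ*D) ≤ 2^H * (2*δ*((64/3)*δ*Pc*2^H*2^H)) := by
          apply mul_le_mul_of_nonneg_left _ (le_of_lt h2H)
          apply mul_le_mul_of_nonneg_left hDle (by linarith)
      _ = (128/3)*δ^2*Pc*2^H*2^H*2^H := by ring
  have hdenge : 4*(2^H*Pc) ≤ 2*(S0+S1) := by nlinarith [hS0low, hS1low]
  have hdenpos : (0:ℝ) < 4*(2^H*Pc) := by positivity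
  refine (div_le_div₀ (by positivity) hnumle hdenpos hdenge).trans ?_
  rw [div_le_iff₀ hdenpos]
  have hp : (2:ℝ)^(2*H+4) = 2^H * 2^H * 16 := by
    rw [show 2*H+4 = H+H+4 by ring, pow_add, pow_add]
    norm_num
  rw [hp]
  have hkey : (0:ℝ) ≤ δ^2 * Pc * (2^H*2^H*2^H) := by positivity
  nlinarith [hkey]
end

section
/- Fix k ∈ ℕ and a function q : 𝔽₂^k → [1/2 - 2^{-(k+3)}, 1/2 + 2^{-(k+3)}]. Then there exists a probability distribution μ on 𝔽₂^{k+1} such that for all z ∈ 𝔽₂^k: P_{F ~ μ}[F₀ + z₁F₁ + ⋯ + z_kF_k ≡ 1 (mod 2)] = q(z). That is, every near-uniform function on 𝔽₂^k can be realized exactly as the success probability of a random affine form evaluated at z. -/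
/-!
Write `χ_w(F) = (-1)^{w ⬝ F}` for `w, F ∈ 𝔽₂ⁿ`. These characters are orthogonal: the sum of
`χ_v χ_w = χ_{v+w}` over `F` is `2ⁿ` if `v = w` and `0` otherwise. Hence for distinct nonzero
`a_z` the function `μ = 2⁻ⁿ (1 + ∑_z ε_z χ_{a_z})` has total mass `1` and correlation exactly `ε_z`
with `χ_{a_z}`, and it is nonnegative as soon as `∑_z |ε_z| ≤ 1`. Since
`P[a_z ⬝ F = 1] = (1 - E[χ_{a_z}]) / 2`, taking `a_z = (1, z)` and `ε_z = 1 - 2 q(z)` realizes `q`;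
the hypothesis on `q` gives `∑_z |ε_z| ≤ 2ᵏ · 2^{-(k+2)} = 1/4`.
-/

open Finset

lemma zmod_two_eq_zero_or_eq_one : ∀ x : ZMod 2, x = 0 ∨ x = 1 := by decide

noncomputable def signChar : AddChar (ZMod 2) ℝ :=
  AddChar.zmodChar 2 (by norm_num : (-1 : ℝ) ^ 2 = 1)

@[simp] lemma signChar_one : signChar 1 = -1 := by
  simp [signChar, AddChar.zmodChar_apply, ZMod.val_one]

lemma signChar_eq_one_iff {x : ZMod 2} : signChar x = 1 ↔ x = 0 := by
  obtain rfl | rfl := zmod_two_eq_zero_or_eq_one x <;> norm_num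

lemma abs_signChar (x : ZMod 2) : |signChar x| = 1 := by
  obtain rfl | rfl := zmod_two_eq_zero_or_eq_one x <;> simp

lemma ite_eq_one_eq_one_sub_signChar_div_two (x : ZMod 2) :
    (if x = 1 then 1 else 0 : ℝ) = (1 - signChar x) / 2 := by
  obtain rfl | rfl := zmod_two_eq_zero_or_eq_one x <;> norm_num

section BiasedDensity

variable {ι Z : Type*} [Fintype ι] [Fintype Z]

noncomputable def biasedDensity (a : Z → ι → ZMod 2) (ε : Z → ℝ) (F : ι → ZMod 2) : ℝ :=
  (1 + ∑ z, ε z * signChar (a z ⬝ᵥ F)) / 2 ^ Fintype.card ι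

lemma biasedDensity_nonneg (a : Z → ι → ZMod 2) {ε : Z → ℝ} (hε : ∑ z, |ε z| ≤ 1)
    (F : ι → ZMod 2) : 0 ≤ biasedDensity a ε F := by
  have hsum : |∑ z, ε z * signChar (a z ⬝ᵥ F)| ≤ 1 :=
    calc _ ≤ ∑ z, |ε z * signChar (a z ⬝ᵥ F)| := abs_sum_le_sum_abs _ _
      _ = ∑ z, |ε z| := by simp_rw [abs_mul, abs_signChar, mul_one]
      _ ≤ 1 := hε
  exact div_nonneg (by linarith [neg_le_of_abs_le hsum]) (by positivity)

variable [DecidableEq ι]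

lemma sum_signChar_dotProduct (w : ι → ZMod 2) :
    ∑ F : ι → ZMod 2, signChar (w ⬝ᵥ F) = if w = 0 then 2 ^ Fintype.card ι else 0 := by
  let ψ : AddChar (ι → ZMod 2) ℝ :=
    signChar.compAddMonoidHom (AddMonoidHom.mk' (w ⬝ᵥ ·) (dotProduct_add w))
  have hψ : ψ = 0 ↔ w = 0 := by
    refine ⟨fun h => funext fun i => ?_, fun h => ?_⟩
    · simpa [ψ, signChar_eq_one_iff, dotProduct_single] using
        AddChar.eq_zero_iff.1 h (Pi.single i 1)
    · simp [AddChar.eq_zero_iff, ψ, h]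
  simpa [hψ, ψ] using AddChar.sum_eq_ite ψ

lemma sum_signChar_dotProduct_mul (v w : ι → ZMod 2) :
    ∑ F : ι → ZMod 2, signChar (v ⬝ᵥ F) * signChar (w ⬝ᵥ F) =
      if v = w then 2 ^ Fintype.card ι else 0 := by
  have hw : -w = w := funext fun i => ZMod.neg_eq_self_mod_two (w i)
  simp only [← AddChar.map_add_eq_mul, ← add_dotProduct, sum_signChar_dotProduct,
    add_eq_zero_iff_eq_neg, hw]

lemma sum_ite_dotProduct_eq_one (w : ι → ZMod 2) (μ : (ι → ZMod 2) → ℝ) :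
    ∑ F, (if w ⬝ᵥ F = 1 then μ F else 0) =
      (∑ F, μ F - ∑ F, μ F * signChar (w ⬝ᵥ F)) / 2 := by
  rw [← sum_sub_distrib, sum_div]
  refine sum_congr rfl fun F _ => ?_
  rw [← mul_boole, ite_eq_one_eq_one_sub_signChar_div_two]
  ring

lemma sum_biasedDensity (a : Z → ι → ZMod 2) (ha₀ : ∀ z, a z ≠ 0) (ε : Z → ℝ) :
    ∑ F, biasedDensity a ε F = 1 := by
  have hcard : (Fintype.card (ι → ZMod 2) : ℝ) = 2 ^ Fintype.card ι := by simp
  simp only [biasedDensity, ← sum_div, sum_add_distrib, sum_const, card_univ, nsmul_one, hcard]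
  rw [sum_comm]
  simp [← mul_sum, sum_signChar_dotProduct, ha₀]

lemma sum_biasedDensity_mul_signChar {a : Z → ι → ZMod 2} (ha : Function.Injective a)
    (ha₀ : ∀ z, a z ≠ 0) (ε : Z → ℝ) (z : Z) :
    ∑ F, biasedDensity a ε F * signChar (a z ⬝ᵥ F) = ε z := by
  classical
  simp only [biasedDensity, div_mul_eq_mul_div, ← sum_div, add_mul, one_mul, sum_add_distrib,
    sum_mul, mul_assoc]
  rw [sum_comm]
  simp [← mul_sum, sum_signChar_dotProduct, sum_signChar_dotProduct_mul, ha₀, ha.eq_iff]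

end BiasedDensity

lemma vecCons_one_dotProduct {k : ℕ} (z : Fin k → ZMod 2) (F : Fin (k + 1) → ZMod 2) :
    Matrix.vecCons 1 z ⬝ᵥ F = F 0 + ∑ i, z i * F i.succ := by
  simp [dotProduct, Fin.sum_univ_succ]

lemma sum_abs_one_sub_two_mul_le_one (k : ℕ) (q : (Fin k → ZMod 2) → ℝ)
    (hq : ∀ z, q z ∈ Set.Icc (1 / 2 - (1 / 2 : ℝ) ^ (k + 3)) (1 / 2 + (1 / 2 : ℝ) ^ (k + 3))) :
    ∑ z, |1 - 2 * q z| ≤ 1 :=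
  calc ∑ z, |1 - 2 * q z| ≤ ∑ _z : Fin k → ZMod 2, 2 * (1 / 2 : ℝ) ^ (k + 3) := by
        refine sum_le_sum fun z _ => abs_le.2 ⟨?_, ?_⟩ <;> linarith [(hq z).1, (hq z).2]
    _ = 1 / 4 := by
        simp only [sum_const, card_univ, Fintype.card_fun, ZMod.card, Fintype.card_fin,
          nsmul_eq_mul]
        rw [pow_add, one_div, inv_pow, inv_pow]
        field_simp
        push_cast
        ring
    _ ≤ 1 := by norm_num

/-- Fix `k ∈ ℕ` and a function `q : 𝔽₂^k → [1/2 - 2^{-(k+3)}, 1/2 + 2^{-(k+3)}]`.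
Then there exists a probability distribution `μ` on `𝔽₂^{k+1}` such that for all `z ∈ 𝔽₂^k`,
`P_{F ~ μ}[F₀ + z₁F₁ + ⋯ + z_kF_k ≡ 1 (mod 2)] = q(z)`. -/
theorem affine_form_realization (k : ℕ) (q : (Fin k → ZMod 2) → ℝ)
    (hq : ∀ z, q z ∈ Set.Icc (1 / 2 - (1 / 2 : ℝ) ^ (k + 3)) (1 / 2 + (1 / 2 : ℝ) ^ (k + 3))) :
    ∃ μ : (Fin (k + 1) → ZMod 2) → ℝ,
      (∀ F, 0 ≤ μ F) ∧ (∑ F, μ F = 1) ∧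
        ∀ z : Fin k → ZMod 2,
          (∑ F : Fin (k + 1) → ZMod 2,
              if F 0 + ∑ i : Fin k, z i * F i.succ = 1 then μ F else 0) = q z := by
  set a : (Fin k → ZMod 2) → Fin (k + 1) → ZMod 2 := Matrix.vecCons 1
  have ha : Function.Injective a := fun _ _ h => (Matrix.vecCons_inj.1 h).2
  have ha₀ : ∀ z, a z ≠ 0 := fun z h => by simpa [a] using congrFun h 0
  set ε : (Fin k → ZMod 2) → ℝ := fun z => 1 - 2 * q z
  refine ⟨biasedDensity a ε, biasedDensity_nonneg a (sum_abs_one_sub_two_mul_le_one k q hq),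
    sum_biasedDensity a ha₀ ε, fun z => ?_⟩
  simp_rw [← vecCons_one_dotProduct]
  rw [sum_ite_dotProduct_eq_one, sum_biasedDensity a ha₀, sum_biasedDensity_mul_signChar ha ha₀]
  ring
end

section
/- Consider the self-supervised LPN identity: fix sk ∈ 𝔽₂ⁿ and δ ∈ (0, 1/2). Let (u, b) be distributed so that u ~ Unif(𝔽₂ⁿ) and b = ⟨u, sk⟩ + e where e ~ Ber(1/2 - 2δ²) independent of u. Let u' ~ Unif(𝔽₂ⁿ) and b' ~ Unif(𝔽₂) be independent of (u, b). Then the pair (x₁, x₂) := ((u', b'), (u + u', b + b')) has the same joint distribution as ((u₁, ⟨u₁, sk⟩ + e₁ + s), (u₂, ⟨u₂, sk⟩ + e₂ + s)) where u₁, u₂ ~ Unif(𝔽₂ⁿ), e₁, e₂ ~ Ber(1/2 - δ), and s ~ Ber(1/2) are all independent. -/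
/-- The pmf of `Ber(p)` on `𝔽₂`. -/
noncomputable def berZ (p : ℝ) (x : ZMod 2) : ℝ := if x = 1 then p else 1 - p

/-- The inner product over `𝔽₂ⁿ`. -/
def ip {n : ℕ} (u v : Fin n → ZMod 2) : ZMod 2 := ∑ i, u i * v i


lemma zadd_aux (c : ZMod 2) : c + c = 0 := by revert c; decide

lemma ip_add_aux {n : ℕ} (a b sk : Fin n → ZMod 2) : ip (a + b) sk = ip a sk + ip b sk := by
  simp [ip, add_mul, Finset.sum_add_distrib]

lemma sum_if_const_aux {α : Type*} [Fintype α] (p : Prop) [Decidable p] (f : α → ℝ) :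
    ∑ x : α, (if p then f x else 0) = if p then ∑ x, f x else 0 := by
  split <;> simp

lemma sum_zmod2_aux (f : ZMod 2 → ℝ) : ∑ x : ZMod 2, f x = f 0 + f 1 := Fin.sum_univ_two f

/-- **self-supervised LPN identity.** Fix `sk ∈ 𝔽₂ⁿ` and `δ ∈ (0, 1/2)`.
Let `(u, b)` be an LPN sample at noise level `1/2 - 2δ²` (`u ~ Unif(𝔽₂ⁿ)`,
`b = ⟨u, sk⟩ + e`, `e ~ Ber(1/2 - 2δ²)` independent), and let `u' ~ Unif(𝔽₂ⁿ)`,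
`b' ~ Unif(𝔽₂)` be independent of `(u, b)`. Then `((u', b'), (u + u', b + b'))` has the
same joint distribution as `((u₁, ⟨u₁,sk⟩ + e₁ + s), (u₂, ⟨u₂,sk⟩ + e₂ + s))` where
`u₁, u₂ ~ Unif(𝔽₂ⁿ)`, `e₁, e₂ ~ Ber(1/2 - δ)`, `s ~ Ber(1/2)` are all independent.
Stated as equality of the pmfs at every point `pq`. -/
theorem self_supervised_lpn_identity (n : ℕ) (sk : Fin n → ZMod 2) (δ : ℝ)
    (hδ : δ ∈ Set.Ioo (0 : ℝ) (1/2))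
    (pq : ((Fin n → ZMod 2) × ZMod 2) × ((Fin n → ZMod 2) × ZMod 2)) :
    (∑ u : Fin n → ZMod 2, ∑ e : ZMod 2, ∑ u' : Fin n → ZMod 2, ∑ b' : ZMod 2,
        ((1 / 2 : ℝ) ^ n * berZ (1 / 2 - 2 * δ ^ 2) e * (1 / 2 : ℝ) ^ n * (1 / 2)) *
          (if pq = ((u', b'), (u + u', (ip u sk + e) + b')) then 1 else 0))
      = (∑ u₁ : Fin n → ZMod 2, ∑ u₂ : Fin n → ZMod 2,
          ∑ e₁ : ZMod 2, ∑ e₂ : ZMod 2, ∑ s : ZMod 2,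
          ((1 / 2 : ℝ) ^ n * (1 / 2 : ℝ) ^ n *
              berZ (1 / 2 - δ) e₁ * berZ (1 / 2 - δ) e₂ * (1 / 2)) *
            (if pq = ((u₁, ip u₁ sk + e₁ + s), (u₂, ip u₂ sk + e₂ + s)) then 1 else 0)) := by
  obtain ⟨⟨a₁, c₁⟩, a₂, c₂⟩ := pq
  have h1 : ∀ (u u' : Fin n → ZMod 2), (a₂ = u + u') ↔ (a₂ + u' = u) := by
    intro u u'
    constructor <;> intro h <;>
      · subst h; rw [add_assoc]; funext i; simp [zadd_aux]
  have h2 : ∀ (c x e b : ZMod 2), (c = x + e + b) ↔ (x + c + b = e) := by decide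
  simp only [Prod.mk.injEq, mul_ite, mul_one, mul_zero, ite_and, h1, h2,
    sum_if_const_aux, Finset.sum_ite_eq, Finset.mem_univ, if_true, sum_zmod2_aux,
    Finset.sum_add_distrib]
  rw [ip_add_aux]
  generalize ip a₁ sk = x
  generalize ip a₂ sk = y
  fin_cases x <;> fin_cases y <;> fin_cases c₁ <;> fin_cases c₂ <;>
    · simp (config := { decide := true }) only [berZ]
      norm_num
      ring
end
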